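/- arXiv:2003.13305 — 6 statements merged into one kernel-verified Lean document; each statement's English description precedes it below -/
import Mathlib

section
/- Let ζ₁ = (u₁, w₁) and ζ₂ = (u₂, w₂) be corners of the box. Then ζ₁ and ζ₂ are connected in the corner graph if and only if u₁ and u₂ are connected in the open primal graph and w₁ and w₂ are connected in the open dual graph. -/
open SimpleGraph

/-! We work on the box `{0, …, n} × {0, …, m} ⊆ ℤ²`.  Dual vertices are encoded by their
integer coordinates: the pair `(i, j) ∈ ℤ²` (with `−1 ≤ i ≤ n`, `−1 ≤ j ≤ m`) stands for
the dual point `(i + 1/2, j + 1/2)`. -/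

/-- `u` is a primal vertex of the box. -/
def inPrimal (n m : ℕ) (u : ℤ × ℤ) : Prop :=
  0 ≤ u.1 ∧ u.1 ≤ (n : ℤ) ∧ 0 ≤ u.2 ∧ u.2 ≤ (m : ℤ)

/-- `w` encodes a dual vertex `(w.1 + 1/2, w.2 + 1/2)` of the box. -/
def inDual (n m : ℕ) (w : ℤ × ℤ) : Prop :=
  -1 ≤ w.1 ∧ w.1 ≤ (n : ℤ) ∧ -1 ≤ w.2 ∧ w.2 ≤ (m : ℤ)

/-- Two points of `ℤ²` at Euclidean distance `1`. -/
def stepAdj (a b : ℤ × ℤ) : Prop :=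
  (a.1 = b.1 ∧ |a.2 - b.2| = 1) ∨ (a.2 = b.2 ∧ |a.1 - b.1| = 1)

lemma stepAdj.symm {a b : ℤ × ℤ} (h : stepAdj a b) : stepAdj b a := by
  rcases h with ⟨h1, h2⟩ | ⟨h1, h2⟩
  · exact Or.inl ⟨h1.symm, by rwa [abs_sub_comm]⟩
  · exact Or.inr ⟨h1.symm, by rwa [abs_sub_comm]⟩

/-- The open primal graph of an FK configuration `ω` (free boundary conditions):
its edges are the open primal edges of the box. -/
def primalGraph (n m : ℕ) (ω : Sym2 (ℤ × ℤ) → Bool) : SimpleGraph (ℤ × ℤ) where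
  Adj u v := u ≠ v ∧ inPrimal n m u ∧ inPrimal n m v ∧ stepAdj u v ∧ ω s(u, v) = true
  symm := by
    constructor
    rintro u v ⟨h1, h2, h3, h4, h5⟩
    exact ⟨h1.symm, h3, h2, h4.symm, by rwa [Sym2.eq_swap]⟩
  loopless := by constructor; rintro u ⟨h1, -⟩; exact h1 rfl

/-- The primal edge crossed by the dual edge `{w, w'}` (all in integer coordinates:
the dual edge joining `(w.1 + 1/2, w.2 + 1/2)` and `(w'.1 + 1/2, w'.2 + 1/2)`). -/
def crossEdge (w w' : ℤ × ℤ) : Sym2 (ℤ × ℤ) :=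
  if w.1 = w'.1 then s((w.1, max w.2 w'.2), (w.1 + 1, max w.2 w'.2))
  else s((max w.1 w'.1, w.2), (max w.1 w'.1, w.2 + 1))

/-- A set of primal vertices forming an edge of the box. -/
def edgeInBox (n m : ℕ) (e : Sym2 (ℤ × ℤ)) : Prop := ∀ v ∈ e, inPrimal n m v

/-- A dual edge is interior iff its crossing primal edge lies in the box. -/
def isInterior (n m : ℕ) (w w' : ℤ × ℤ) : Prop := edgeInBox n m (crossEdge w w')

lemma crossEdge_symm {w w' : ℤ × ℤ} (h : stepAdj w w') : crossEdge w w' = crossEdge w' w := by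
  unfold crossEdge
  rcases h with ⟨h1, h2⟩ | ⟨h1, h2⟩
  · rw [if_pos h1, if_pos h1.symm, h1, max_comm]
  · have hne : w.1 ≠ w'.1 := by
      intro hc
      rw [hc, sub_self, abs_zero] at h2
      exact one_ne_zero h2.symm
    rw [if_neg hne, if_neg (Ne.symm hne), h1, max_comm]

/-- The open dual graph of an FK configuration `ω` with free boundary conditions: an
interior dual edge is present iff its crossing primal edge is closed; all boundary dual
edges are present. -/
def dualGraph (n m : ℕ) (ω : Sym2 (ℤ × ℤ) → Bool) : SimpleGraph (ℤ × ℤ) where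
  Adj w w' := w ≠ w' ∧ inDual n m w ∧ inDual n m w' ∧ stepAdj w w' ∧
    (isInterior n m w w' → ω (crossEdge w w') = false)
  symm := by
    constructor
    rintro w w' ⟨h1, h2, h3, h4, h5⟩
    refine ⟨h1.symm, h3, h2, h4.symm, ?_⟩
    unfold isInterior at h5 ⊢
    rw [crossEdge_symm h4.symm]
    exact h5
  loopless := by constructor; rintro w ⟨h1, -⟩; exact h1 rfl

/-- A corner: a pair `(u, w)` of a primal vertex and a dual vertex at Euclidean distance
`√2 / 2`. -/
def isCorner (n m : ℕ) (ζ : (ℤ × ℤ) × (ℤ × ℤ)) : Prop :=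
  inPrimal n m ζ.1 ∧ inDual n m ζ.2 ∧
    (ζ.2.1 = ζ.1.1 ∨ ζ.2.1 = ζ.1.1 - 1) ∧ (ζ.2.2 = ζ.1.2 ∨ ζ.2.2 = ζ.1.2 - 1)

/-- The corner graph: corners `(u, w)` and `(u', w)` are adjacent whenever `{u, u'}` is an
open primal edge (and `w` is at distance `√2/2` from both `u` and `u'`), and corners
`(u, w)` and `(u, w')` are adjacent whenever `{w, w'}` is an open dual edge (and `u` is at
distance `√2/2` from both `w` and `w'`). -/
def cornerGraph (n m : ℕ) (ω : Sym2 (ℤ × ℤ) → Bool) :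
    SimpleGraph ((ℤ × ℤ) × (ℤ × ℤ)) where
  Adj ζ ζ' := ζ ≠ ζ' ∧ isCorner n m ζ ∧ isCorner n m ζ' ∧
    ((ζ.2 = ζ'.2 ∧ (primalGraph n m ω).Adj ζ.1 ζ'.1) ∨
     (ζ.1 = ζ'.1 ∧ (dualGraph n m ω).Adj ζ.2 ζ'.2))
  symm := by
    constructor
    rintro ζ ζ' ⟨h1, h2, h3, h4⟩
    refine ⟨h1.symm, h3, h2, ?_⟩
    rcases h4 with ⟨ha, hb⟩ | ⟨ha, hb⟩
    · exact Or.inl ⟨ha.symm, hb.symm⟩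
    · exact Or.inr ⟨ha.symm, hb.symm⟩
  loopless := by constructor; rintro ζ ⟨h1, -⟩; exact h1 rfl

/-!
A corner edge moves one coordinate of a corner along an open edge and keeps the other, so
connected corners have connected projections.

The converse is proved by induction on the number of open edges, closing an open edge
`e = {p, q}` whose two sides are the faces `a` and `b`. This trades the corner edges `A A'` and
`B B'` along `e`, where `A = (p, a)`, `B = (p, b)`, `A' = (q, a)`, `B' = (q, b)`, for `A B` and
`A' B'`. If `e` lies on a cycle, `a` and `b` are not dual-connected, since a closed primal path and
a closed dual path cross an even number of times; so a corner path that needs the new edges cannot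
exist. If `e` is a bridge, the loop through `A'` after closing `e` cannot reach `p`, so it comes
back to `B'` along corner edges that were already there: the four corners at `e` stay connected.
This also shows by the same induction that the dual graph of a forest is connected.
-/

namespace SimpleGraph

variable {V W : Type*} {G : SimpleGraph V}

theorem Reachable.lift {H : SimpleGraph W} (f : V → W)
    (hf : ∀ ⦃x y⦄, G.Adj x y → H.Reachable (f x) (f y)) {u v : V} (h : G.Reachable u v) :
    H.Reachable (f u) (f v) := by
  rw [reachable_iff_reflTransGen] at h ⊢
  exact h.lift' f fun x y hxy => (reachable_iff_reflTransGen _ _).mp (hf hxy)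

theorem Reachable.elim_sup_edge {x y u v : V} (h : (G ⊔ edge x y).Reachable u v) :
    G.Reachable u v ∨ (G.Reachable u x ∧ G.Reachable y v) ∨
      (G.Reachable u y ∧ G.Reachable x v) := by
  rw [reachable_iff_reflTransGen] at h
  induction h using Relation.ReflTransGen.head_induction_on with
  | refl => exact Or.inl .rfl
  | head hab _ ih =>
    rcases hab with hab | hab
    · rcases ih with h | ⟨h₁, h₂⟩ | ⟨h₁, h₂⟩
      · exact Or.inl (hab.reachable.trans h)
      · exact Or.inr (Or.inl ⟨hab.reachable.trans h₁, h₂⟩)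
      · exact Or.inr (Or.inr ⟨hab.reachable.trans h₁, h₂⟩)
    · obtain ⟨⟨rfl, rfl⟩ | ⟨rfl, rfl⟩, -⟩ := (edge_adj ..).mp hab <;>
        rcases ih with h | ⟨h₁, h₂⟩ | ⟨h₁, h₂⟩
      · exact Or.inr (Or.inl ⟨.rfl, h⟩)
      · exact Or.inr (Or.inl ⟨.rfl, h₂⟩)
      · exact Or.inl h₂
      · exact Or.inr (Or.inr ⟨.rfl, h⟩)
      · exact Or.inl h₂
      · exact Or.inr (Or.inr ⟨.rfl, h₂⟩)

theorem Reachable.of_sup_edge {x y u v : V} (h : (G ⊔ edge x y).Reachable u v)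
    (hxy : G.Reachable x y) : G.Reachable u v := by
  rcases h.elim_sup_edge with h | ⟨h₁, h₂⟩ | ⟨h₁, h₂⟩
  exacts [h, h₁.trans (hxy.trans h₂), h₁.trans (hxy.symm.trans h₂)]

theorem reachable_of_adj_add_one (f : ℤ → V) {a b : ℤ}
    (hf : ∀ i, a ≤ i → i < b → G.Adj (f i) (f (i + 1))) (hab : a ≤ b) :
    G.Reachable (f a) (f b) := by
  induction b, hab using Int.leInduction with
  | base => exact .rfl
  | succ b hab ih =>
    exact (ih fun i hi hib => hf i hi (by omega)).trans (hf b hab (by omega)).reachable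

theorem reachable_iterate {f : V → V} {x : V} {j : ℕ}
    (h : ∀ i < j, G.Reachable (f^[i] x) (f (f^[i] x))) : G.Reachable x (f^[j] x) := by
  induction j with
  | zero => exact .rfl
  | succ j ih =>
    rw [Function.iterate_succ_apply']
    exact (ih fun i hi => h i (by omega)).trans (h j (by omega))

theorem Walk.sum_darts_add {R : Type*} [CommRing R] [CharP R 2] (f : V → R) {u v : V}
    (c : G.Walk u v) :
    (c.darts.map fun d => f d.fst + f d.snd).sum = f u + f v := by
  induction c with
  | nil => simp [CharTwo.add_self_eq_zero]
  | @cons _ x _ _ _ ih =>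
    rw [darts_cons, List.map_cons, List.sum_cons, ih]
    linear_combination f x * CharTwo.two_eq_zero (R := R)

end SimpleGraph

namespace Corner

variable {n m : ℕ} {ω : Sym2 (ℤ × ℤ) → Bool}

/-- The offsets `w - u` of the four corners `(u, w)` at a primal vertex `u`, counterclockwise
starting from the north-east face. -/
def IsOffset (d : ℤ × ℤ) : Prop := d = (0, 0) ∨ d = (-1, 0) ∨ d = (-1, -1) ∨ d = (0, -1)

instance : DecidablePred IsOffset := fun _ => inferInstanceAs (Decidable (_ ∨ _))

/-- Quarter turn counterclockwise: `u + rot d` is the face following `u + d` around `u`. -/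
def rot (d : ℤ × ℤ) : ℤ × ℤ := (-1 - d.2, d.1)

def rotInv (d : ℤ × ℤ) : ℤ × ℤ := (d.2, -1 - d.1)

/-- `u + edgeDir d` is the neighbour of `u` across the edge separating the faces `u + d` and
`u + rot d`. -/
def edgeDir (d : ℤ × ℤ) : ℤ × ℤ := (d.1 - d.2, d.1 + d.2 + 1)

theorem IsOffset.rot {d : ℤ × ℤ} (h : IsOffset d) : IsOffset (rot d) := by
  rcases h with rfl | rfl | rfl | rfl <;> decide

theorem IsOffset.rotInv {d : ℤ × ℤ} (h : IsOffset d) : IsOffset (rotInv d) := by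
  rcases h with rfl | rfl | rfl | rfl <;> decide

theorem exists_iterate_rot_eq {d d' : ℤ × ℤ} (hd : IsOffset d) (hd' : IsOffset d') :
    ∃ k, rot^[k] d = d' := by
  rcases hd with rfl | rfl | rfl | rfl <;> rcases hd' with rfl | rfl | rfl | rfl <;>
    first | exact ⟨0, rfl⟩ | exact ⟨1, by decide⟩ | exact ⟨2, by decide⟩ | exact ⟨3, by decide⟩

theorem rot_ne (d : ℤ × ℤ) : rot d ≠ d := by
  simp only [rot, ne_eq, Prod.ext_iff, not_and]; omega

theorem rotInv_rot (d : ℤ × ℤ) : rotInv (rot d) = d := by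
  simp [rot, rotInv]

theorem rot_rotInv (d : ℤ × ℤ) : rot (rotInv d) = d := by
  simp [rot, rotInv]

theorem rotInv_rotInv_ne (d : ℤ × ℤ) : rotInv (rotInv d) ≠ d := by
  simp only [rotInv, ne_eq, Prod.ext_iff, not_and]; omega

theorem edgeDir_ne_zero (d : ℤ × ℤ) : edgeDir d ≠ 0 := by
  simp only [edgeDir, ne_eq, Prod.ext_iff, Prod.fst_zero, Prod.snd_zero, not_and]; omega

theorem sub_edgeDir (d : ℤ × ℤ) : d - edgeDir d = rotInv d := by
  simp only [edgeDir, rotInv, Prod.ext_iff, Prod.fst_sub, Prod.snd_sub]; constructor <;> ring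

theorem edgeDir_rotInv_rotInv (d : ℤ × ℤ) : edgeDir (rotInv (rotInv d)) = -edgeDir d := by
  simp only [edgeDir, rotInv, Prod.ext_iff, Prod.fst_neg, Prod.snd_neg]; constructor <;> ring

theorem isCorner_iff {u w : ℤ × ℤ} :
    isCorner n m (u, w) ↔ inPrimal n m u ∧ inDual n m w ∧ IsOffset (w - u) := by
  simp only [isCorner, IsOffset, Prod.ext_iff, Prod.fst_sub, Prod.snd_sub]
  constructor
  · rintro ⟨hu, hw, h₁, h₂⟩; exact ⟨hu, hw, by omega⟩
  · rintro ⟨hu, hw, h⟩; exact ⟨hu, hw, by omega, by omega⟩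

theorem isCorner_add {u d : ℤ × ℤ} (hu : inPrimal n m u) (hd : IsOffset d) :
    isCorner n m (u, u + d) := by
  obtain ⟨h₁, h₂, h₃, h₄⟩ := hu
  rcases hd with rfl | rfl | rfl | rfl <;>
    simp only [isCorner, inPrimal, inDual, Prod.fst_add, Prod.snd_add] <;> omega

theorem stepAdj_add_edgeDir (u : ℤ × ℤ) {d : ℤ × ℤ} (hd : IsOffset d) :
    stepAdj u (u + edgeDir d) := by
  rcases hd with rfl | rfl | rfl | rfl <;>
    simp only [stepAdj, edgeDir, Prod.fst_add, Prod.snd_add] <;> norm_num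

theorem stepAdj_add_rot (u : ℤ × ℤ) {d : ℤ × ℤ} (hd : IsOffset d) :
    stepAdj (u + d) (u + rot d) := by
  rcases hd with rfl | rfl | rfl | rfl <;>
    simp only [stepAdj, rot, Prod.fst_add, Prod.snd_add] <;> norm_num

theorem exists_isOffset_of_stepAdj {u v : ℤ × ℤ} (h : stepAdj u v) :
    ∃ d, IsOffset d ∧ v = u + edgeDir d := by
  obtain ⟨u₁, u₂⟩ := u
  obtain ⟨v₁, v₂⟩ := v
  simp only [stepAdj] at h
  rcases h with ⟨rfl, h⟩ | ⟨rfl, h⟩ <;> rcases abs_eq (zero_le_one' ℤ) |>.mp h with h | h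
  · exact ⟨(-1, -1), by decide, by simp [edgeDir, Prod.ext_iff]; omega⟩
  · exact ⟨(0, 0), by decide, by simp [edgeDir, Prod.ext_iff]; omega⟩
  · exact ⟨(-1, 0), by decide, by simp [edgeDir, Prod.ext_iff]; omega⟩
  · exact ⟨(0, -1), by decide, by simp [edgeDir, Prod.ext_iff]; omega⟩

theorem crossEdge_add_rot (u : ℤ × ℤ) {d : ℤ × ℤ} (hd : IsOffset d) :
    crossEdge (u + d) (u + rot d) = s(u, u + edgeDir d) := by
  obtain ⟨u₁, u₂⟩ := u
  rcases hd with rfl | rfl | rfl | rfl <;>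
    simp only [crossEdge, rot, edgeDir, Prod.mk_add_mk] <;> norm_num

theorem eq_flanks_of_crossEdge_eq {u d w w' : ℤ × ℤ} (hd : IsOffset d) (hs : stepAdj w w')
    (hc : crossEdge w w' = s(u, u + edgeDir d)) :
    (w = u + d ∧ w' = u + rot d) ∨ (w = u + rot d ∧ w' = u + d) := by
  obtain ⟨u₁, u₂⟩ := u
  obtain ⟨w₁, w₂⟩ := w
  obtain ⟨w₁', w₂'⟩ := w'
  simp only [stepAdj] at hs
  rcases hs with ⟨e₁, e₂⟩ | ⟨e₁, e₂⟩ <;> rcases abs_eq (zero_le_one' ℤ) |>.mp e₂ with e₃ | e₃ <;>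
    rcases hd with rfl | rfl | rfl | rfl <;>
    (simp only [crossEdge, edgeDir, Prod.mk_add_mk] at hc
     split_ifs at hc <;>
     (rw [Sym2.eq_iff] at hc
      simp only [rot, Prod.mk_add_mk, Prod.mk.injEq] at hc ⊢
      omega))

theorem eq_or_eq_add_edgeDir {u d z : ℤ × ℤ} (hd : IsOffset d)
    (h₁ : IsOffset (u + d - z)) (h₂ : IsOffset (u + rot d - z)) :
    z = u ∨ z = u + edgeDir d := by
  obtain ⟨u₁, u₂⟩ := u
  obtain ⟨z₁, z₂⟩ := z
  rcases hd with rfl | rfl | rfl | rfl <;>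
    simp only [IsOffset, rot, edgeDir, Prod.mk_add_mk, Prod.mk_sub_mk, Prod.mk.injEq] at h₁ h₂ ⊢ <;>
    omega

theorem exists_crossEdge_eq (w w' : ℤ × ℤ) :
    ∃ c c' : ℤ × ℤ, crossEdge w w' = s(c, c') ∧ stepAdj c c' := by
  unfold crossEdge
  split_ifs
  · exact ⟨_, _, rfl, Or.inr ⟨rfl, by simp⟩⟩
  · exact ⟨_, _, rfl, Or.inl ⟨rfl, by simp⟩⟩

noncomputable def crossing (z t : (ℤ × ℤ) × (ℤ × ℤ)) : ZMod 2 :=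
  if crossEdge t.1 t.2 = s(z.1, z.2) then 1 else 0

/-- Whether the dual step `t` crosses the vertical ray pointing down from the primal vertex `x`. -/
noncomputable def crossesRayBelow (x : ℤ × ℤ) (t : (ℤ × ℤ) × (ℤ × ℤ)) : ZMod 2 :=
  if t.1.2 = t.2.2 ∧ max t.1.1 t.2.1 = x.1 ∧ t.1.2 < x.2 then 1 else 0

/-- Whether the primal step `z` crosses the vertical ray pointing down from the dual vertex `y`. -/
noncomputable def rayBelowCrosses (z : (ℤ × ℤ) × (ℤ × ℤ)) (y : ℤ × ℤ) : ZMod 2 :=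
  if z.1.2 = z.2.2 ∧ y.1 = min z.1.1 z.2.1 ∧ y.2 < z.1.2 then 1 else 0

set_option maxHeartbeats 1000000 in
/-- The crossing indicator is a coboundary in `z` plus a coboundary in `t`. -/
theorem crossing_eq {z z' y y' : ℤ × ℤ} (hz : stepAdj z z') (hy : stepAdj y y') :
    crossing (z, z') (y, y') =
      (crossesRayBelow z (y, y') + crossesRayBelow z' (y, y')) +
        (rayBelowCrosses (z, z') y + rayBelowCrosses (z, z') y') := by
  unfold crossing crossesRayBelow rayBelowCrosses
  rcases hz with ⟨a1, a2⟩ | ⟨a1, a2⟩ <;>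
    rcases (abs_eq (zero_le_one' ℤ)).mp a2 with a3 | a3 <;>
    rcases hy with ⟨b1, b2⟩ | ⟨b1, b2⟩ <;>
    rcases (abs_eq (zero_le_one' ℤ)).mp b2 with b3 | b3 <;>
    (first
      | rw [crossEdge, if_pos b1]
      | rw [crossEdge, if_neg (by omega : ¬ y.1 = y'.1)]) <;>
    simp only [Sym2.eq_iff, Prod.ext_iff] <;>
    split_ifs <;> first | decide | omega

theorem sum_crossing_eq_zero {G H : SimpleGraph (ℤ × ℤ)} (hG : ∀ ⦃x y⦄, G.Adj x y → stepAdj x y)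
    (hH : ∀ ⦃x y⦄, H.Adj x y → stepAdj x y) {u w : ℤ × ℤ} (c : G.Walk u u) (c' : H.Walk w w) :
    (c.darts.map fun d => (c'.darts.map fun d' => crossing d.toProd d'.toProd).sum).sum = 0 := by
  let F (x : ℤ × ℤ) : ZMod 2 := (c'.darts.map fun d' => crossesRayBelow x d'.toProd).sum
  have inner (d : G.Dart) :
      (c'.darts.map fun d' => crossing d.toProd d'.toProd).sum = F d.fst + F d.snd := by
    rw [List.map_congr_left fun d' _ => crossing_eq (hG d.adj) (hH d'.adj), List.sum_map_add,
      List.sum_map_add, c'.sum_darts_add (rayBelowCrosses d.toProd), CharTwo.add_self_eq_zero,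
      add_zero]
  rw [List.map_congr_left fun d _ => inner d, c.sum_darts_add F, CharTwo.add_self_eq_zero]

open Classical in
/-- The corner after `(u, u + d)` on its loop: across the edge between the faces `u + d` and
`u + rot d` if that edge is open, otherwise around `u` to `(u, u + rot d)`. -/
noncomputable def loopNext (n m : ℕ) (ω : Sym2 (ℤ × ℤ) → Bool)
    (ζ : (ℤ × ℤ) × (ℤ × ℤ)) : (ℤ × ℤ) × (ℤ × ℤ) :=
  if (primalGraph n m ω).Adj ζ.1 (ζ.1 + edgeDir (ζ.2 - ζ.1)) then
    (ζ.1 + edgeDir (ζ.2 - ζ.1), ζ.2)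
  else (ζ.1, ζ.1 + rot (ζ.2 - ζ.1))

open Classical in
noncomputable def loopPrev (n m : ℕ) (ω : Sym2 (ℤ × ℤ) → Bool)
    (ζ : (ℤ × ℤ) × (ℤ × ℤ)) : (ℤ × ℤ) × (ℤ × ℤ) :=
  if (primalGraph n m ω).Adj ζ.1 (ζ.1 + edgeDir (rotInv (ζ.2 - ζ.1))) then
    (ζ.1 + edgeDir (rotInv (ζ.2 - ζ.1)), ζ.2)
  else (ζ.1, ζ.1 + rotInv (ζ.2 - ζ.1))

theorem loopNext_of_adj {u d : ℤ × ℤ} (h : (primalGraph n m ω).Adj u (u + edgeDir d)) :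
    loopNext n m ω (u, u + d) = (u + edgeDir d, u + d) := by
  rw [loopNext, if_pos (by rwa [add_sub_cancel_left]), add_sub_cancel_left]

theorem loopNext_of_not_adj {u d : ℤ × ℤ} (h : ¬ (primalGraph n m ω).Adj u (u + edgeDir d)) :
    loopNext n m ω (u, u + d) = (u, u + rot d) := by
  rw [loopNext, if_neg (by rwa [add_sub_cancel_left]), add_sub_cancel_left]

theorem loopPrev_loopNext (ζ : (ℤ × ℤ) × (ℤ × ℤ)) : loopPrev n m ω (loopNext n m ω ζ) = ζ := by
  obtain ⟨u, w⟩ := ζ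
  obtain ⟨d, rfl⟩ : ∃ d, w = u + d := ⟨w - u, by abel⟩
  by_cases h : (primalGraph n m ω).Adj u (u + edgeDir d)
  · have hd : u + d - (u + edgeDir d) = rotInv d := by
      rw [add_sub_add_left_eq_sub, sub_edgeDir]
    have hback : u + edgeDir d + edgeDir (rotInv (rotInv d)) = u := by
      rw [edgeDir_rotInv_rotInv, add_neg_cancel_right]
    rw [loopNext_of_adj h, loopPrev, hd, hback, if_pos h.symm]
  · rw [loopNext_of_not_adj h, loopPrev, add_sub_cancel_left, rotInv_rot, if_neg h]

theorem loopNext_injective : Function.Injective (loopNext n m ω) :=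
  Function.LeftInverse.injective loopPrev_loopNext

theorem isCorner_loopNext {ζ : (ℤ × ℤ) × (ℤ × ℤ)} (hζ : isCorner n m ζ) :
    isCorner n m (loopNext n m ω ζ) := by
  obtain ⟨u, w⟩ := ζ
  obtain ⟨d, rfl⟩ : ∃ d, w = u + d := ⟨w - u, by abel⟩
  obtain ⟨hu, hw, hd⟩ := isCorner_iff.mp hζ
  rw [add_sub_cancel_left] at hd
  by_cases h : (primalGraph n m ω).Adj u (u + edgeDir d)
  · rw [loopNext_of_adj h, isCorner_iff, add_sub_add_left_eq_sub, sub_edgeDir]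
    exact ⟨h.2.2.1, hw, hd.rotInv⟩
  · rw [loopNext_of_not_adj h]
    exact isCorner_add hu hd.rot

theorem adj_loopNext {ζ : (ℤ × ℤ) × (ℤ × ℤ)} (hζ : isCorner n m ζ) :
    (cornerGraph n m ω).Adj ζ (loopNext n m ω ζ) := by
  have hnext := isCorner_loopNext (ω := ω) hζ
  obtain ⟨u, w⟩ := ζ
  obtain ⟨d, rfl⟩ : ∃ d, w = u + d := ⟨w - u, by abel⟩
  obtain ⟨hu, hw, hd⟩ := isCorner_iff.mp hζ
  rw [add_sub_cancel_left] at hd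
  by_cases h : (primalGraph n m ω).Adj u (u + edgeDir d)
  · rw [loopNext_of_adj h] at hnext ⊢
    exact ⟨fun h' => h.ne (congrArg Prod.fst h'), hζ, hnext, Or.inl ⟨rfl, h⟩⟩
  · rw [loopNext_of_not_adj h] at hnext ⊢
    have hne : u + d ≠ u + rot d := fun h' => rot_ne d (add_left_cancel h').symm
    refine ⟨fun h' => hne (congrArg Prod.snd h'), hζ, hnext, Or.inr ⟨rfl, hne, hw,
      (isCorner_iff.mp hnext).2.1, stepAdj_add_rot u hd, fun hi => ?_⟩⟩
    rw [isInterior, crossEdge_add_rot u hd] at hi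
    rw [crossEdge_add_rot u hd]
    by_contra hω
    exact h ⟨fun h' => edgeDir_ne_zero d (by simpa using h'.symm), hu,
      hi _ (Sym2.mem_mk_right _ _), stepAdj_add_edgeDir u hd, by simpa using hω⟩

theorem isCorner_iterate_loopNext {ζ : (ℤ × ℤ) × (ℤ × ℤ)} (hζ : isCorner n m ζ) (i : ℕ) :
    isCorner n m ((loopNext n m ω)^[i] ζ) :=
  Function.Iterate.rec _ hζ (fun _ => isCorner_loopNext) i

theorem setOf_isCorner_finite : {ζ | isCorner n m ζ}.Finite := by
  refine (Set.finite_Icc (((0 : ℤ), (0 : ℤ)), ((-1 : ℤ), (-1 : ℤ))) ((n, m), (n, m))).subset ?_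
  rintro ⟨⟨u₁, u₂⟩, ⟨w₁, w₂⟩⟩ ⟨⟨h₁, h₂, h₃, h₄⟩, ⟨h₅, h₆, h₇, h₈⟩, -⟩
  exact ⟨⟨⟨h₁, h₃⟩, ⟨h₅, h₇⟩⟩, ⟨⟨h₂, h₄⟩, ⟨h₆, h₈⟩⟩⟩

theorem mem_periodicPts_loopNext {ζ : (ℤ × ℤ) × (ℤ × ℤ)} (hζ : isCorner n m ζ) :
    ζ ∈ Function.periodicPts (loopNext n m ω) := by
  have hmaps : Set.MapsTo (loopNext n m ω) {ζ | isCorner n m ζ} {ζ | isCorner n m ζ} :=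
    fun _ => isCorner_loopNext
  have := setOf_isCorner_finite (n := n) (m := m) |>.to_subtype
  obtain ⟨k, hk, hper⟩ := Function.mem_periodicPts.mp <|
    (hmaps.restrict_inj.mpr loopNext_injective.injOn).mem_periodicPts ⟨ζ, hζ⟩
  refine Function.mk_mem_periodicPts hk ?_
  simpa [Function.IsPeriodicPt, Function.IsFixedPt, hmaps.iterate_restrict, Subtype.ext_iff]
    using hper

theorem reachable_fst_of_reachable {ζ ζ' : (ℤ × ℤ) × (ℤ × ℤ)}
    (h : (cornerGraph n m ω).Reachable ζ ζ') : (primalGraph n m ω).Reachable ζ.1 ζ'.1 :=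
  h.lift Prod.fst fun _ _ (h : (cornerGraph n m ω).Adj _ _) =>
    h.2.2.2.elim (fun h => h.2.reachable) fun h => h.1 ▸ .rfl

theorem reachable_snd_of_reachable {ζ ζ' : (ℤ × ℤ) × (ℤ × ℤ)}
    (h : (cornerGraph n m ω).Reachable ζ ζ') : (dualGraph n m ω).Reachable ζ.2 ζ'.2 :=
  h.lift Prod.snd fun _ _ (h : (cornerGraph n m ω).Adj _ _) =>
    h.2.2.2.elim (fun h => h.1 ▸ .rfl) fun h => h.2.reachable

theorem primalGraph_mono : Monotone (primalGraph n m) := by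
  rintro ω₁ ω₂ h u v ⟨hne, hu, hv, hs, ho⟩
  exact ⟨hne, hu, hv, hs, Bool.le_iff_imp.mp (h _) ho⟩

theorem dualGraph_anti : Antitone (dualGraph n m) := by
  rintro ω₁ ω₂ h w w' ⟨hne, hw, hw', hs, hc⟩
  refine ⟨hne, hw, hw', hs, fun hi => ?_⟩
  by_contra hω
  simpa [hc hi, hω] using Bool.le_iff_imp.mp (h (crossEdge w w'))

theorem primalGraph_update_false (ω : Sym2 (ℤ × ℤ) → Bool) (e : Sym2 (ℤ × ℤ)) :
    primalGraph n m (Function.update ω e false) = (primalGraph n m ω).deleteEdges {e} := by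
  ext u v
  by_cases h : s(u, v) = e <;> simp [primalGraph, h, Function.update_apply]

theorem dualGraph_update_false_adj {ω : Sym2 (ℤ × ℤ) → Bool} {e : Sym2 (ℤ × ℤ)} {w w' : ℤ × ℤ}
    (h : (dualGraph n m (Function.update ω e false)).Adj w w') :
    (dualGraph n m ω).Adj w w' ∨ crossEdge w w' = e := by
  obtain ⟨hne, hw, hw', hs, hc⟩ := h
  by_cases he : crossEdge w w' = e
  · exact Or.inr he
  · refine Or.inl ⟨hne, hw, hw', hs, fun hi => ?_⟩
    simpa [Function.update_apply, he] using hc hi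

theorem crossEdge_ne_of_adj {ω : Sym2 (ℤ × ℤ) → Bool} {w w' u v : ℤ × ℤ}
    (hd : (dualGraph n m ω).Adj w w') (hp : (primalGraph n m ω).Adj u v) :
    crossEdge w w' ≠ s(u, v) := by
  intro h
  have hi : isInterior n m w w' := by
    rw [isInterior, h]
    intro x hx
    rcases Sym2.mem_iff.mp hx with rfl | rfl
    exacts [hp.2.1, hp.2.2.1]
  have := hd.2.2.2.2 hi
  rw [h, hp.2.2.2.2] at this
  exact Bool.noConfusion this

theorem edgeSet_primalGraph_finite (ω : Sym2 (ℤ × ℤ) → Bool) :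
    (primalGraph n m ω).edgeSet.Finite := by
  have box := Set.finite_Icc ((0 : ℤ), (0 : ℤ)) (n, m)
  refine ((box.prod box).image fun x => s(x.1, x.2)).subset ?_
  rintro ⟨u, v⟩ ⟨-, ⟨hu₁, hu₂, hu₃, hu₄⟩, ⟨hv₁, hv₂, hv₃, hv₄⟩, -⟩
  exact ⟨(u, v), ⟨⟨⟨hu₁, hu₃⟩, ⟨hu₂, hu₄⟩⟩, ⟨⟨hv₁, hv₃⟩, ⟨hv₂, hv₄⟩⟩⟩, rfl⟩

/-- An open edge from `p` to `q = p + edgeDir d`; the faces `a = p + d` and `b = p + rot d` lie on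
either side of it. -/
structure OpenEdge (n m : ℕ) (ω : Sym2 (ℤ × ℤ) → Bool) where
  p : ℤ × ℤ
  d : ℤ × ℤ
  isOffset : IsOffset d
  adj : (primalGraph n m ω).Adj p (p + edgeDir d)

namespace OpenEdge

variable (S : OpenEdge n m ω)

def q : ℤ × ℤ := S.p + edgeDir S.d

def a : ℤ × ℤ := S.p + S.d

def b : ℤ × ℤ := S.p + rot S.d

def e : Sym2 (ℤ × ℤ) := s(S.p, S.q)

def ω' : Sym2 (ℤ × ℤ) → Bool := Function.update ω S.e false

def A : (ℤ × ℤ) × (ℤ × ℤ) := (S.p, S.a)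

def B : (ℤ × ℤ) × (ℤ × ℤ) := (S.p, S.b)

def A' : (ℤ × ℤ) × (ℤ × ℤ) := (S.q, S.a)

def B' : (ℤ × ℤ) × (ℤ × ℤ) := (S.q, S.b)

theorem exists_of_adj {u v : ℤ × ℤ} (h : (primalGraph n m ω).Adj u v) :
    ∃ S : OpenEdge n m ω, S.p = u ∧ S.q = v := by
  obtain ⟨d, hd, rfl⟩ := exists_isOffset_of_stepAdj h.2.2.2.1
  exact ⟨⟨u, d, hd, h⟩, rfl, rfl⟩

theorem ω'_le : S.ω' ≤ ω := by
  intro x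
  rw [ω', Function.update_apply]
  split_ifs <;> simp

theorem primalGraph_ω' : primalGraph n m S.ω' = (primalGraph n m ω).deleteEdges {S.e} :=
  primalGraph_update_false ω S.e

theorem isBridge_iff :
    (primalGraph n m ω).IsBridge S.e ↔ ¬ (primalGraph n m S.ω').Reachable S.p S.q := by
  rw [primalGraph_ω']; rfl

theorem primalGraph_ω'_lt : primalGraph n m S.ω' < primalGraph n m ω := by
  refine lt_of_le_of_ne (primalGraph_mono S.ω'_le) fun h => ?_
  have := S.adj
  rw [← h, primalGraph_ω', deleteEdges_adj] at this
  exact this.2 rfl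

theorem induction {P : (Sym2 (ℤ × ℤ) → Bool) → Prop}
    (h : ∀ ω, (∀ S : OpenEdge n m ω, P S.ω') → P ω) (ω : Sym2 (ℤ × ℤ) → Bool) : P ω := by
  induction hk : (primalGraph n m ω).edgeSet.ncard using Nat.strong_induction_on
    generalizing ω with
  | _ k ih =>
    refine h ω fun S => ih _ ?_ _ rfl
    exact hk ▸ Set.ncard_lt_ncard (edgeSet_strict_mono S.primalGraph_ω'_lt)
      (edgeSet_primalGraph_finite ω)

theorem inPrimal_p : inPrimal n m S.p := S.adj.2.1

theorem inPrimal_q : inPrimal n m S.q := S.adj.2.2.1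

theorem adj_q_p : (primalGraph n m ω).Adj S.q S.p := S.adj.symm

theorem a_ne_b : S.a ≠ S.b := fun h => rot_ne S.d (add_left_cancel h).symm

theorem a_eq : S.a = S.q + rotInv S.d := by
  rw [q, ← sub_edgeDir, a]; abel

theorem b_eq : S.b = S.q + rotInv (rotInv S.d) := by
  rw [q, ← sub_edgeDir, ← sub_edgeDir, b, rot, edgeDir, edgeDir]
  ext <;> simp <;> ring

theorem isCorner_A : isCorner n m S.A := isCorner_add S.inPrimal_p S.isOffset

theorem isCorner_B : isCorner n m S.B := isCorner_add S.inPrimal_p S.isOffset.rot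

theorem isCorner_A' : isCorner n m S.A' := by
  rw [A', a_eq]; exact isCorner_add S.inPrimal_q S.isOffset.rotInv

theorem isCorner_B' : isCorner n m S.B' := by
  rw [B', b_eq]; exact isCorner_add S.inPrimal_q S.isOffset.rotInv.rotInv

theorem inDual_a : inDual n m S.a := (isCorner_iff.mp S.isCorner_A).2.1

theorem inDual_b : inDual n m S.b := (isCorner_iff.mp S.isCorner_B).2.1

theorem crossEdge_a_b : crossEdge S.a S.b = S.e := crossEdge_add_rot S.p S.isOffset

theorem stepAdj_a_b : stepAdj S.a S.b := stepAdj_add_rot S.p S.isOffset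

theorem adj_A_A' : (cornerGraph n m ω).Adj S.A S.A' :=
  ⟨fun h => S.adj.ne (congrArg Prod.fst h), S.isCorner_A, S.isCorner_A', Or.inl ⟨rfl, S.adj⟩⟩

theorem adj_B_B' : (cornerGraph n m ω).Adj S.B S.B' :=
  ⟨fun h => S.adj.ne (congrArg Prod.fst h), S.isCorner_B, S.isCorner_B', Or.inl ⟨rfl, S.adj⟩⟩

theorem dualGraph_ω'_adj_a_b : (dualGraph n m S.ω').Adj S.a S.b := by
  refine ⟨S.a_ne_b, S.inDual_a, S.inDual_b, S.stepAdj_a_b, fun _ => ?_⟩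
  rw [S.crossEdge_a_b, ω', Function.update_self]

theorem cornerGraph_ω'_adj {ζ ζ' : (ℤ × ℤ) × (ℤ × ℤ)} (h : (cornerGraph n m S.ω').Adj ζ ζ') :
    (cornerGraph n m ω).Adj ζ ζ' ∨ s(ζ, ζ') = s(S.A, S.B) ∨ s(ζ, ζ') = s(S.A', S.B') := by
  obtain ⟨hne, hζ, hζ', ⟨hw, hu⟩ | ⟨hu, hw⟩⟩ := h
  · exact Or.inl ⟨hne, hζ, hζ', Or.inl ⟨hw, primalGraph_mono S.ω'_le hu⟩⟩
  rcases dualGraph_update_false_adj hw with hw | he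
  · exact Or.inl ⟨hne, hζ, hζ', Or.inr ⟨hu, hw⟩⟩
  right
  obtain ⟨u, w⟩ := ζ
  obtain ⟨u', w'⟩ := ζ'
  obtain rfl : u = u' := hu
  have hd := (isCorner_iff.mp hζ).2.2
  have hd' := (isCorner_iff.mp hζ').2.2
  rcases eq_flanks_of_crossEdge_eq S.isOffset hw.2.2.2.1 he with ⟨rfl, rfl⟩ | ⟨rfl, rfl⟩
  · rcases eq_or_eq_add_edgeDir S.isOffset hd hd' with rfl | rfl
    exacts [Or.inl rfl, Or.inr rfl]
  · rcases eq_or_eq_add_edgeDir S.isOffset hd' hd with rfl | rfl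
    exacts [Or.inl Sym2.eq_swap, Or.inr Sym2.eq_swap]

theorem primalGraph_le_sup_edge : primalGraph n m ω ≤ primalGraph n m S.ω' ⊔ edge S.p S.q := by
  intro u v huv
  by_cases he : s(u, v) = S.e
  · exact Or.inr ((edge_adj ..).mpr ⟨Sym2.eq_iff.mp he, huv.ne⟩)
  · exact Or.inl (S.primalGraph_ω' ▸ deleteEdges_adj.mpr ⟨huv, he⟩)

theorem dualGraph_ω'_le_sup_edge : dualGraph n m S.ω' ≤ dualGraph n m ω ⊔ edge S.a S.b := by
  intro w w' h
  rcases dualGraph_update_false_adj h with h' | he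
  · exact Or.inl h'
  · exact Or.inr ((edge_adj ..).mpr
      ⟨eq_flanks_of_crossEdge_eq S.isOffset h.2.2.2.1 he, h.ne⟩)

theorem reachable_sup_edge_of_reachable_ω' {ζ ζ' : (ℤ × ℤ) × (ℤ × ℤ)}
    (h : (cornerGraph n m S.ω').Reachable ζ ζ') :
    (cornerGraph n m ω ⊔ edge S.A S.B).Reachable ζ ζ' := by
  have hG : cornerGraph n m ω ≤ cornerGraph n m ω ⊔ edge S.A S.B := le_sup_left
  have hAB : (cornerGraph n m ω ⊔ edge S.A S.B).Reachable S.A S.B :=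
    Adj.reachable <| Or.inr <| (edge_adj ..).mpr
      ⟨Or.inl ⟨rfl, rfl⟩, fun h => S.a_ne_b (congrArg Prod.snd h)⟩
  have hA'B' : (cornerGraph n m ω ⊔ edge S.A S.B).Reachable S.A' S.B' :=
    (hG S.adj_A_A').reachable.symm.trans (hAB.trans (hG S.adj_B_B').reachable)
  refine h.lift id fun x y hxy => ?_
  rcases S.cornerGraph_ω'_adj hxy with hxy | hxy | hxy
  · exact (hG hxy).reachable
  · rcases Sym2.eq_iff.mp hxy with ⟨rfl, rfl⟩ | ⟨rfl, rfl⟩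
    exacts [hAB, hAB.symm]
  · rcases Sym2.eq_iff.mp hxy with ⟨rfl, rfl⟩ | ⟨rfl, rfl⟩
    exacts [hA'B', hA'B'.symm]

/-- A primal cycle through `e` and a dual cycle through the dual edge of `e` would cross exactly
once. -/
theorem not_reachable_a_b (hpq : (primalGraph n m S.ω').Reachable S.p S.q) :
    ¬ (dualGraph n m ω).Reachable S.a S.b := by
  rintro ⟨Q⟩
  obtain ⟨W⟩ := hpq
  have key := sum_crossing_eq_zero (G := primalGraph n m ω) (H := dualGraph n m S.ω')
    (fun _ _ h => h.2.2.2.1) (fun _ _ h => h.2.2.2.1)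
    ((W.mapLe (primalGraph_mono S.ω'_le)).concat S.adj_q_p)
    ((Q.mapLe (dualGraph_anti S.ω'_le)).concat S.dualGraph_ω'_adj_a_b.symm)
  simp only [Walk.darts_concat, Walk.darts_map, List.concat_eq_append, List.map_append,
    List.sum_append, List.map_map, List.map_singleton, List.sum_singleton] at key
  have hW (d : (primalGraph n m S.ω').Dart) (t : (dualGraph n m ω).Dart) :
      crossing d.toProd t.toProd = 0 :=
    if_neg (crossEdge_ne_of_adj (dualGraph_anti S.ω'_le t.adj) d.adj)
  have hW' (d : (primalGraph n m S.ω').Dart) : crossing d.toProd (S.b, S.a) = 0 :=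
    if_neg (crossEdge_ne_of_adj S.dualGraph_ω'_adj_a_b.symm d.adj)
  have hQ (t : (dualGraph n m ω).Dart) : crossing (S.q, S.p) t.toProd = 0 :=
    if_neg (crossEdge_ne_of_adj t.adj S.adj_q_p)
  have hqp : crossing (S.q, S.p) (S.b, S.a) = 1 := by
    rw [crossing, ← crossEdge_symm S.stepAdj_a_b, S.crossEdge_a_b, e, Sym2.eq_swap, if_pos rfl]
  simp [Function.comp_def, Hom.mapDart_apply, hW, hW', hQ, hqp] at key

theorem loopNext_B' : loopNext n m S.ω' S.B' = S.A' := by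
  have hqp : S.q + edgeDir (rotInv (rotInv S.d)) = S.p := by
    rw [edgeDir_rotInv_rotInv, q, add_neg_cancel_right]
  have hclosed : ¬ (primalGraph n m S.ω').Adj S.q (S.q + edgeDir (rotInv (rotInv S.d))) := by
    rw [hqp, primalGraph_ω', deleteEdges_adj]
    exact fun h => h.2 (Sym2.eq_swap)
  rw [B', b_eq, loopNext_of_not_adj hclosed, rot_rotInv, A', a_eq]

theorem loopNext_A'_ne_B' : loopNext n m S.ω' S.A' ≠ S.B' := by
  rw [A', a_eq, B', b_eq]
  by_cases h : (primalGraph n m S.ω').Adj S.q (S.q + edgeDir (rotInv S.d))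
  · rw [loopNext_of_adj h, ← a_eq, ← b_eq]
    exact fun h' => S.a_ne_b (congrArg Prod.snd h')
  · rw [loopNext_of_not_adj h, rot_rotInv]
    exact fun h' => rotInv_rotInv_ne S.d (add_left_cancel (congrArg Prod.snd h')).symm

/-- If `e` is a bridge, then after closing it the loop leaving `B'` through `A'` returns to `B'`
without visiting the corners at `p`, so it only uses corner edges that are present for `ω`. -/
theorem reachable_A'_B' (hbr : ¬ (primalGraph n m S.ω').Reachable S.p S.q) :
    (cornerGraph n m ω).Reachable S.A' S.B' := by
  obtain ⟨k, hk, hper⟩ :=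
    Function.mem_periodicPts.mp (mem_periodicPts_loopNext (ω := S.ω') S.isCorner_A')
  have hex : ∃ j, (loopNext n m S.ω')^[j] S.A' = S.B' := by
    refine ⟨k - 1, loopNext_injective (n := n) (m := m) (ω := S.ω') ?_⟩
    rw [← Function.iterate_succ_apply' (loopNext n m S.ω'), Nat.succ_eq_add_one,
      Nat.sub_one_add_one hk.ne', hper.eq, S.loopNext_B']
  have hcorner := isCorner_iterate_loopNext (ω := S.ω') S.isCorner_A'
  have hfar (i : ℕ) : ((loopNext n m S.ω')^[i] S.A').1 ≠ S.p := fun h =>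
    hbr (h ▸ reachable_fst_of_reachable (reachable_iterate (G := cornerGraph n m S.ω')
      fun j _ => (adj_loopNext (hcorner j)).reachable)).symm
  rw [← Nat.find_spec hex]
  refine reachable_iterate fun i hi => Adj.reachable ?_
  rcases S.cornerGraph_ω'_adj (adj_loopNext (hcorner i)) with h | h | h
  · exact h
  · rcases Sym2.eq_iff.mp h with ⟨h, -⟩ | ⟨h, -⟩ <;> exact absurd (congrArg Prod.fst h) (hfar i)
  · rcases Sym2.eq_iff.mp h with ⟨h, h'⟩ | ⟨h, -⟩
    · rw [h] at h'
      exact absurd h' S.loopNext_A'_ne_B'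
    · exact absurd h (Nat.find_min hex hi)

theorem reachable_A_B (hbr : ¬ (primalGraph n m S.ω').Reachable S.p S.q) :
    (cornerGraph n m ω).Reachable S.A S.B :=
  S.adj_A_A'.reachable.trans ((S.reachable_A'_B' hbr).trans S.adj_B_B'.reachable.symm)

end OpenEdge

theorem primalGraph_eq_bot_of_isEmpty (h : IsEmpty (OpenEdge n m ω)) : primalGraph n m ω = ⊥ := by
  ext u v
  refine ⟨fun huv => ?_, False.elim⟩
  obtain ⟨S, -⟩ := OpenEdge.exists_of_adj huv
  exact h.elim S

theorem reachable_iterate_rot (h₀ : primalGraph n m ω = ⊥) {u d : ℤ × ℤ} (hu : inPrimal n m u)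
    (hd : IsOffset d) (k : ℕ) :
    (cornerGraph n m ω).Reachable (u, u + d) (u, u + rot^[k] d) := by
  induction k generalizing d with
  | zero => exact .rfl
  | succ k ih =>
    have hadj := adj_loopNext (ω := ω) (isCorner_add hu hd)
    rw [loopNext_of_not_adj (by simp [h₀])] at hadj
    exact hadj.reachable.trans (ih hd.rot)

theorem dualGraph_adj_of_primalGraph_eq_bot (h₀ : primalGraph n m ω = ⊥) {w w' : ℤ × ℤ}
    (hw : inDual n m w) (hw' : inDual n m w') (hs : stepAdj w w') :
    (dualGraph n m ω).Adj w w' := by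
  have hne : w ≠ w' := by
    rintro rfl
    simp [stepAdj] at hs
  refine ⟨hne, hw, hw', hs, fun hi => ?_⟩
  obtain ⟨c, c', hcc', hstep⟩ := exists_crossEdge_eq w w'
  rw [isInterior, hcc'] at hi
  rw [hcc']
  by_contra hω
  have hadj : (primalGraph n m ω).Adj c c' :=
    ⟨by rintro rfl; simp [stepAdj] at hstep, hi _ (Sym2.mem_mk_left _ _),
      hi _ (Sym2.mem_mk_right _ _), hstep, by simpa using hω⟩
  simp [h₀] at hadj

theorem dualGraph_reachable_of_primalGraph_eq_bot (h₀ : primalGraph n m ω = ⊥) {w w' : ℤ × ℤ}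
    (hw : inDual n m w) (hw' : inDual n m w') : (dualGraph n m ω).Reachable w w' := by
  have line (f : ℤ → ℤ × ℤ) (lo hi : ℤ) (hf : ∀ i, lo ≤ i → i ≤ hi → inDual n m (f i))
      (hs : ∀ i, stepAdj (f i) (f (i + 1))) {a b : ℤ} (ha : lo ≤ a ∧ a ≤ hi)
      (hb : lo ≤ b ∧ b ≤ hi) : (dualGraph n m ω).Reachable (f a) (f b) := by
    have step (i : ℤ) (h₁ : lo ≤ i) (h₂ : i < hi) : (dualGraph n m ω).Adj (f i) (f (i + 1)) :=
      dualGraph_adj_of_primalGraph_eq_bot h₀ (hf i h₁ h₂.le) (hf (i + 1) (by omega) h₂) (hs i)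
    rcases le_total a b with hab | hab
    · exact reachable_of_adj_add_one f (fun i h₁ h₂ => step i (by omega) (by omega)) hab
    · exact (reachable_of_adj_add_one f (fun i h₁ h₂ => step i (by omega) (by omega)) hab).symm
  obtain ⟨h₁, h₂, h₃, h₄⟩ := hw
  obtain ⟨h₁', h₂', h₃', h₄'⟩ := hw'
  have horizontal := line (fun i => (i, w.2)) (-1) n (fun i hi hi' => ⟨hi, hi', h₃, h₄⟩)
    (fun i => Or.inr ⟨rfl, by simp⟩) (a := w.1) (b := w'.1) ⟨h₁, h₂⟩ ⟨h₁', h₂'⟩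
  have vertical := line (fun j => (w'.1, j)) (-1) m (fun j hj hj' => ⟨h₁', h₂', hj, hj'⟩)
    (fun j => Or.inl ⟨rfl, by simp⟩) (a := w.2) (b := w'.2) ⟨h₃, h₄⟩ ⟨h₃', h₄'⟩
  exact horizontal.trans vertical

theorem dualGraph_reachable_of_isAcyclic (hω : (primalGraph n m ω).IsAcyclic) {w w' : ℤ × ℤ}
    (hw : inDual n m w) (hw' : inDual n m w') : (dualGraph n m ω).Reachable w w' := by
  induction ω using OpenEdge.induction with
  | h ω ih =>
    rcases isEmpty_or_nonempty (OpenEdge n m ω) with hempty | ⟨⟨S⟩⟩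
    · exact dualGraph_reachable_of_primalGraph_eq_bot (primalGraph_eq_bot_of_isEmpty hempty) hw hw'
    have hbr := S.isBridge_iff.mp (isAcyclic_iff_forall_adj_isBridge.mp hω S.adj)
    have hab := reachable_snd_of_reachable (S.reachable_A_B hbr)
    have hω' := hω.anti (primalGraph_mono S.ω'_le)
    exact ((ih S hω').mono S.dualGraph_ω'_le_sup_edge).of_sup_edge hab

def CornersConnected (n m : ℕ) (ω : Sym2 (ℤ × ℤ) → Bool) : Prop :=
  ∀ ζ ζ' : (ℤ × ℤ) × (ℤ × ℤ), isCorner n m ζ → isCorner n m ζ' →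
    (primalGraph n m ω).Reachable ζ.1 ζ'.1 → (dualGraph n m ω).Reachable ζ.2 ζ'.2 →
    (cornerGraph n m ω).Reachable ζ ζ'

theorem cornersConnected_of_primalGraph_eq_bot (h₀ : primalGraph n m ω = ⊥) :
    CornersConnected n m ω := by
  rintro ⟨u, w⟩ ⟨u', w'⟩ hζ hζ' hu -
  obtain rfl : u = u' := reachable_bot.mp (h₀ ▸ hu)
  obtain ⟨hu, -, hd⟩ := isCorner_iff.mp hζ
  obtain ⟨k, hk⟩ := exists_iterate_rot_eq hd (isCorner_iff.mp hζ').2.2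
  simpa [hk] using reachable_iterate_rot h₀ hu hd k

namespace OpenEdge

variable (S : OpenEdge n m ω)

theorem cornersConnected_of_reachable (ih : CornersConnected n m S.ω')
    (hpq : (primalGraph n m S.ω').Reachable S.p S.q) : CornersConnected n m ω := by
  intro ζ ζ' hζ hζ' hu hw
  have hu' := (hu.mono S.primalGraph_le_sup_edge).of_sup_edge hpq
  have hζζ' := S.reachable_sup_edge_of_reachable_ω'
    (ih ζ ζ' hζ hζ' hu' (hw.mono (dualGraph_anti S.ω'_le)))
  rcases hζζ'.elim_sup_edge with h | ⟨h₁, h₂⟩ | ⟨h₁, h₂⟩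
  · exact h
  · exact absurd ((reachable_snd_of_reachable h₁).symm.trans
      (hw.trans (reachable_snd_of_reachable h₂).symm)) (S.not_reachable_a_b hpq)
  · exact absurd ((reachable_snd_of_reachable h₂).trans
      (hw.symm.trans (reachable_snd_of_reachable h₁))) (S.not_reachable_a_b hpq)

theorem cornersConnected_of_not_reachable (ih : CornersConnected n m S.ω')
    (hbr : ¬ (primalGraph n m S.ω').Reachable S.p S.q)
    (hdual : ∀ w w', inDual n m w → inDual n m w' → (dualGraph n m ω).Reachable w w') :
    CornersConnected n m ω := by
  have hlift {ζ ζ'} (h : (cornerGraph n m S.ω').Reachable ζ ζ') :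
      (cornerGraph n m ω).Reachable ζ ζ' :=
    (S.reachable_sup_edge_of_reachable_ω' h).of_sup_edge (S.reachable_A_B hbr)
  have hdual' {ζ ζ'} (hζ : isCorner n m ζ) (hζ' : isCorner n m ζ') :
      (dualGraph n m S.ω').Reachable ζ.2 ζ'.2 :=
    (hdual _ _ (isCorner_iff.mp hζ).2.1 (isCorner_iff.mp hζ').2.1).mono (dualGraph_anti S.ω'_le)
  have hA {ζ} (hζ : isCorner n m ζ) (h : (primalGraph n m S.ω').Reachable ζ.1 S.p ∨
      (primalGraph n m S.ω').Reachable ζ.1 S.q) : (cornerGraph n m ω).Reachable ζ S.A := by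
    rcases h with h | h
    · exact hlift (ih ζ S.A hζ S.isCorner_A h (hdual' hζ S.isCorner_A))
    · exact (hlift (ih ζ S.A' hζ S.isCorner_A' h (hdual' hζ S.isCorner_A'))).trans
        S.adj_A_A'.reachable.symm
  intro ζ ζ' hζ hζ' hu hw
  rcases (hu.mono S.primalGraph_le_sup_edge).elim_sup_edge with h | ⟨h₁, h₂⟩ | ⟨h₁, h₂⟩
  · exact hlift (ih ζ ζ' hζ hζ' h (hw.mono (dualGraph_anti S.ω'_le)))
  · exact (hA hζ (Or.inl h₁)).trans (hA hζ' (Or.inr h₂.symm)).symm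
  · exact (hA hζ (Or.inr h₁)).trans (hA hζ' (Or.inl h₂.symm)).symm

end OpenEdge

theorem cornersConnected (ω : Sym2 (ℤ × ℤ) → Bool) : CornersConnected n m ω := by
  induction ω using OpenEdge.induction with
  | h ω ih =>
    by_cases hω : (primalGraph n m ω).IsAcyclic
    · rcases isEmpty_or_nonempty (OpenEdge n m ω) with hempty | ⟨⟨S⟩⟩
      · exact cornersConnected_of_primalGraph_eq_bot (primalGraph_eq_bot_of_isEmpty hempty)
      exact S.cornersConnected_of_not_reachable (ih S)
        (S.isBridge_iff.mp (isAcyclic_iff_forall_adj_isBridge.mp hω S.adj))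
        fun _ _ => dualGraph_reachable_of_isAcyclic hω
    · obtain ⟨u, v, huv, hbr⟩ : ∃ u v, (primalGraph n m ω).Adj u v ∧
          ¬ (primalGraph n m ω).IsBridge s(u, v) := by
        simpa [isAcyclic_iff_forall_adj_isBridge] using hω
      obtain ⟨S, rfl, rfl⟩ := OpenEdge.exists_of_adj huv
      exact S.cornersConnected_of_reachable (ih S) (not_not.mp (S.isBridge_iff.not.mp hbr))

end Corner

theorem corner_connected_iff_primal_and_dual_connected_general
    (n m : ℕ) (ω : Sym2 (ℤ × ℤ) → Bool)
    (u₁ w₁ u₂ w₂ : ℤ × ℤ)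
    (h₁ : isCorner n m (u₁, w₁)) (h₂ : isCorner n m (u₂, w₂)) :
    (cornerGraph n m ω).Reachable (u₁, w₁) (u₂, w₂) ↔
      (primalGraph n m ω).Reachable u₁ u₂ ∧ (dualGraph n m ω).Reachable w₁ w₂ :=
  ⟨fun h => ⟨Corner.reachable_fst_of_reachable h, Corner.reachable_snd_of_reachable h⟩,
    fun ⟨hu, hw⟩ => Corner.cornersConnected ω _ _ h₁ h₂ hu hw⟩

/-- Two corners `ζ₁ = (u₁, w₁)` and `ζ₂ = (u₂, w₂)` are connected in the corner graph if
and only if `u₁` and `u₂` are connected in the open primal graph and `w₁` and `w₂` are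
connected in the open dual graph. -/
theorem corner_connected_iff_primal_and_dual_connected
    (n m : ℕ) (hn : 1 ≤ n) (hm : 1 ≤ m) (ω : Sym2 (ℤ × ℤ) → Bool)
    (u₁ w₁ u₂ w₂ : ℤ × ℤ)
    (h₁ : isCorner n m (u₁, w₁)) (h₂ : isCorner n m (u₂, w₂)) :
    (cornerGraph n m ω).Reachable (u₁, w₁) (u₂, w₂) ↔
      (primalGraph n m ω).Reachable u₁ u₂ ∧ (dualGraph n m ω).Reachable w₁ w₂ :=
  corner_connected_iff_primal_and_dual_connected_general n m ω u₁ w₁ u₂ w₂ h₁ h₂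
end

section
/- Every corner has degree exactly 2 in the corner graph. (Consequently, with free boundary conditions every FK configuration's corner graph is a disjoint union of cycles, i.e. the loop representation consists of loops only.) -/
open SimpleGraph

/-! Write a corner as `(u, w)`. On its horizontal side it sees the primal edge from `u` to the
reflection of `u` across the vertical line through the dual vertex `w`, and this edge is crossed by
the dual edge from `w` to the reflection of `w` across the horizontal line through `u`; likewise on
its vertical side. On each side exactly one of the two edges is present in the loop representation:
the primal one if it lies in the box and is open, the dual one otherwise (it then crosses either a
closed edge or no edge at all, and boundary dual edges are always open). The two neighbours
obtained this way are distinct, and the geometry of `ℤ²` rules out any other neighbour. -/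

def IsCornerPair (u w : ℤ × ℤ) : Prop :=
  (w.1 = u.1 ∨ w.1 = u.1 - 1) ∧ (w.2 = u.2 ∨ w.2 = u.2 - 1)

def IsOpenEdge (n m : ℕ) (ω : Sym2 (ℤ × ℤ) → Bool) (e : Sym2 (ℤ × ℤ)) : Prop :=
  edgeInBox n m e ∧ ω e = true

def primalFlipX (u w : ℤ × ℤ) : ℤ × ℤ := (2 * w.1 + 1 - u.1, u.2)

def primalFlipY (u w : ℤ × ℤ) : ℤ × ℤ := (u.1, 2 * w.2 + 1 - u.2)

def dualFlipX (u w : ℤ × ℤ) : ℤ × ℤ := (2 * u.1 - 1 - w.1, w.2)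

def dualFlipY (u w : ℤ × ℤ) : ℤ × ℤ := (w.1, 2 * u.2 - 1 - w.2)

open Classical in
noncomputable def horizontalNeighbor (n m : ℕ) (ω : Sym2 (ℤ × ℤ) → Bool) (u w : ℤ × ℤ) :
    (ℤ × ℤ) × (ℤ × ℤ) :=
  if IsOpenEdge n m ω s(u, primalFlipX u w) then (primalFlipX u w, w) else (u, dualFlipY u w)

open Classical in
noncomputable def verticalNeighbor (n m : ℕ) (ω : Sym2 (ℤ × ℤ) → Bool) (u w : ℤ × ℤ) :
    (ℤ × ℤ) × (ℤ × ℤ) :=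
  if IsOpenEdge n m ω s(u, primalFlipY u w) then (primalFlipY u w, w) else (u, dualFlipX u w)

section Corner

variable {n m : ℕ} {ω : Sym2 (ℤ × ℤ) → Bool} {u w : ℤ × ℤ}

lemma inDual_of_isCornerPair (hu : inPrimal n m u) (h : IsCornerPair u w) : inDual n m w := by
  obtain ⟨_, _, _, _⟩ := hu
  obtain ⟨_, _⟩ := h
  refine ⟨?_, ?_, ?_, ?_⟩ <;> omega

lemma crossEdge_dualFlipY (h : IsCornerPair u w) :
    crossEdge w (dualFlipY u w) = s(u, primalFlipX u w) := by
  obtain ⟨hx, hy⟩ := h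
  simp only [crossEdge, dualFlipY, primalFlipX, if_true, Sym2.eq_iff, Prod.ext_iff]
  omega

lemma crossEdge_dualFlipX (h : IsCornerPair u w) :
    crossEdge w (dualFlipX u w) = s(u, primalFlipY u w) := by
  obtain ⟨hx, hy⟩ := h
  have hne : w.1 ≠ 2 * u.1 - 1 - w.1 := by omega
  rw [crossEdge, dualFlipX, if_neg hne]
  simp only [primalFlipY, Sym2.eq_iff, Prod.ext_iff]
  omega

lemma isCornerPair_primal_step_iff (h : IsCornerPair u w) (u' : ℤ × ℤ) :
    (u ≠ u' ∧ stepAdj u u' ∧ IsCornerPair u' w) ↔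
      u' = primalFlipX u w ∨ u' = primalFlipY u w := by
  obtain ⟨hx, hy⟩ := h
  simp only [stepAdj, IsCornerPair, primalFlipX, primalFlipY, abs_eq (zero_le_one' ℤ), ne_eq,
    Prod.ext_iff]
  omega

lemma isCornerPair_dual_step_iff (h : IsCornerPair u w) (w' : ℤ × ℤ) :
    (w ≠ w' ∧ stepAdj w w' ∧ IsCornerPair u w') ↔
      w' = dualFlipY u w ∨ w' = dualFlipX u w := by
  obtain ⟨hx, hy⟩ := h
  simp only [stepAdj, IsCornerPair, dualFlipX, dualFlipY, abs_eq (zero_le_one' ℤ), ne_eq,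
    Prod.ext_iff]
  omega

lemma edgeInBox_mk (x y : ℤ × ℤ) :
    edgeInBox n m s(x, y) ↔ inPrimal n m x ∧ inPrimal n m y := by
  simp only [edgeInBox, Sym2.mem_iff, forall_eq_or_imp, forall_eq]

lemma isCorner_and_primalGraph_adj_iff (hζ : isCorner n m (u, w)) (u' : ℤ × ℤ) :
    isCorner n m (u', w) ∧ (primalGraph n m ω).Adj u u' ↔
      (u' = primalFlipX u w ∧ IsOpenEdge n m ω s(u, primalFlipX u w)) ∨
        (u' = primalFlipY u w ∧ IsOpenEdge n m ω s(u, primalFlipY u w)) := by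
  obtain ⟨hu, hw, hpair⟩ := hζ
  have hstep := isCornerPair_primal_step_iff hpair u'
  constructor
  · rintro ⟨⟨hu', -, hpair'⟩, hne, -, -, hadj, hω⟩
    have hopen : IsOpenEdge n m ω s(u, u') := ⟨(edgeInBox_mk u u').2 ⟨hu, hu'⟩, hω⟩
    rcases hstep.1 ⟨hne, hadj, hpair'⟩ with rfl | rfl
    exacts [Or.inl ⟨rfl, hopen⟩, Or.inr ⟨rfl, hopen⟩]
  · rintro (⟨rfl, hbox, hω⟩ | ⟨rfl, hbox, hω⟩) <;>
    · obtain ⟨hne, hadj, hpair'⟩ := hstep.2 (by simp)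
      have hu' := ((edgeInBox_mk _ _).1 hbox).2
      exact ⟨⟨hu', hw, hpair'⟩, hne, hu, hu', hadj, hω⟩

lemma isCorner_and_dualGraph_adj_iff (hζ : isCorner n m (u, w)) (w' : ℤ × ℤ) :
    isCorner n m (u, w') ∧ (dualGraph n m ω).Adj w w' ↔
      (w' = dualFlipY u w ∧ ¬IsOpenEdge n m ω s(u, primalFlipX u w)) ∨
        (w' = dualFlipX u w ∧ ¬IsOpenEdge n m ω s(u, primalFlipY u w)) := by
  obtain ⟨hu, hw, hpair⟩ := hζ
  have hstep := isCornerPair_dual_step_iff hpair w'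
  have hclosed_iff : (isInterior n m w w' → ω (crossEdge w w') = false) ↔
      ¬IsOpenEdge n m ω (crossEdge w w') := by
    simp only [isInterior, IsOpenEdge, not_and, Bool.not_eq_true]
  constructor
  · rintro ⟨⟨-, -, hpair'⟩, hne, -, -, hadj, hclosed⟩
    rw [hclosed_iff] at hclosed
    rcases hstep.1 ⟨hne, hadj, hpair'⟩ with rfl | rfl
    · exact Or.inl ⟨rfl, crossEdge_dualFlipY hpair ▸ hclosed⟩
    · exact Or.inr ⟨rfl, crossEdge_dualFlipX hpair ▸ hclosed⟩
  · rintro (⟨rfl, hclosed⟩ | ⟨rfl, hclosed⟩)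
    · obtain ⟨hne, hadj, hpair'⟩ := hstep.2 (Or.inl rfl)
      have hw' := inDual_of_isCornerPair hu hpair'
      rw [← crossEdge_dualFlipY hpair, ← hclosed_iff] at hclosed
      exact ⟨⟨hu, hw', hpair'⟩, hne, hw, hw', hadj, hclosed⟩
    · obtain ⟨hne, hadj, hpair'⟩ := hstep.2 (Or.inr rfl)
      have hw' := inDual_of_isCornerPair hu hpair'
      rw [← crossEdge_dualFlipX hpair, ← hclosed_iff] at hclosed
      exact ⟨⟨hu, hw', hpair'⟩, hne, hw, hw', hadj, hclosed⟩

lemma cornerGraph_adj_iff_of_isCorner (hζ : isCorner n m (u, w)) (u' w' : ℤ × ℤ) :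
    (cornerGraph n m ω).Adj (u, w) (u', w') ↔
      (w' = w ∧ isCorner n m (u', w) ∧ (primalGraph n m ω).Adj u u') ∨
        (u' = u ∧ isCorner n m (u, w') ∧ (dualGraph n m ω).Adj w w') := by
  constructor
  · rintro ⟨-, -, hζ', (⟨rfl, hadj⟩ | ⟨rfl, hadj⟩)⟩
    exacts [Or.inl ⟨rfl, hζ', hadj⟩, Or.inr ⟨rfl, hζ', hadj⟩]
  · rintro (⟨rfl, hζ', hadj⟩ | ⟨rfl, hζ', hadj⟩)
    · exact ⟨fun h => hadj.ne (Prod.ext_iff.1 h).1, hζ, hζ', Or.inl ⟨rfl, hadj⟩⟩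
    · exact ⟨fun h => hadj.ne (Prod.ext_iff.1 h).2, hζ, hζ', Or.inr ⟨rfl, hadj⟩⟩

lemma cornerGraph_adj_iff (hζ : isCorner n m (u, w)) (ζ' : (ℤ × ℤ) × (ℤ × ℤ)) :
    (cornerGraph n m ω).Adj (u, w) ζ' ↔
      ζ' = horizontalNeighbor n m ω u w ∨ ζ' = verticalNeighbor n m ω u w := by
  classical
  obtain ⟨u', w'⟩ := ζ'
  rw [cornerGraph_adj_iff_of_isCorner hζ, isCorner_and_primalGraph_adj_iff hζ,
    isCorner_and_dualGraph_adj_iff hζ, horizontalNeighbor, verticalNeighbor, eq_ite_iff,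
    eq_ite_iff]
  simp only [Prod.mk.injEq]
  tauto

lemma horizontalNeighbor_ne_verticalNeighbor (h : IsCornerPair u w) :
    horizontalNeighbor n m ω u w ≠ verticalNeighbor n m ω u w := by
  obtain ⟨hx, hy⟩ := h
  unfold horizontalNeighbor verticalNeighbor
  split_ifs <;>
  · simp only [primalFlipX, primalFlipY, dualFlipX, dualFlipY, ne_eq, Prod.ext_iff]
    omega

end Corner

theorem corner_degree_two_general (n m : ℕ)
    (ω : Sym2 (ℤ × ℤ) → Bool) (ζ : (ℤ × ℤ) × (ℤ × ℤ)) (hζ : isCorner n m ζ) :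
    ((cornerGraph n m ω).neighborSet ζ).ncard = 2 := by
  obtain ⟨u, w⟩ := ζ
  have hnbrs : (cornerGraph n m ω).neighborSet (u, w) =
      {horizontalNeighbor n m ω u w, verticalNeighbor n m ω u w} := by
    ext ζ'
    exact cornerGraph_adj_iff hζ ζ'
  rw [hnbrs, Set.ncard_pair (horizontalNeighbor_ne_verticalNeighbor hζ.2.2)]

/-- Every corner has degree exactly 2 in the corner graph (so that, with free boundary
conditions, the corner graph of every FK configuration is a disjoint union of cycles:
the loop representation consists of loops only). -/
theorem corner_degree_two (n m : ℕ) (hn : 1 ≤ n) (hm : 1 ≤ m)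
    (ω : Sym2 (ℤ × ℤ) → Bool) (ζ : (ℤ × ℤ) × (ℤ × ℤ)) (hζ : isCorner n m ζ) :
    ((cornerGraph n m ω).neighborSet ζ).ncard = 2 :=
  corner_degree_two_general n m ω ζ hζ
end

section
/- Segment-product identity for windings along a loop: let m ≥ 1 and let φ : {1, …, 2m−1} → ℂ satisfy φ(u)² = 1 for every u. Let P be a partition of {1, …, 2m} into m pairs, each pair written (i, τ) with i < τ. Then ∏_{(i,τ) ∈ P} ∏_{u=i}^{τ−1} φ(u) = ∏_{j=1}^{m} φ(2j−1). (Here φ(u) represents the winding phase of the loop segment between the u-th and (u+1)-st insertion points visited along the loop; the winding phase of the arc from the i-th to the τ-th visited point is the product ∏_{u=i}^{τ−1} φ(u) by the composition property.) -/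
/-!
Exchanging the two products, `φ u` occurs once for every pair `(i, τ)` with `i ≤ u < τ`. The
points `1, …, u` are covered twice by the pairs lying below `u` and once by the pairs straddling
`u`, so the number of straddling pairs has the parity of `u`; since `φ u ^ 2 = 1`, only the odd
`u` contribute.
-/

open Finset

theorem Finset.card_eq_sum_card_filter_of_existsUnique {α β : Type*} {s : Finset α}
    {P : Finset β} {r : β → α → Prop} [∀ p, DecidablePred (r p)]
    (h : ∀ x ∈ s, ∃! p, p ∈ P ∧ r p x) :
    #s = ∑ p ∈ P, #{x ∈ s | r p x} := by
  classical
  have hfibre : ∀ x ∈ s, ∑ p ∈ P, (if r p x then 1 else 0) = 1 := fun x hx => by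
    rw [sum_boole, Nat.cast_id, card_eq_one_iff_existsUnique]
    simpa only [mem_filter] using h x hx
  rw [card_eq_sum_ones, ← sum_congr rfl hfibre, sum_comm]
  simp only [card_filter]

theorem card_filter_Icc_one_eq_or_eq {a b u : ℕ} (ha : 1 ≤ a) (hab : a < b) :
    #{x ∈ Icc 1 u | a = x ∨ b = x} =
      (if a ≤ u ∧ u < b then 1 else 0) + 2 * (if b ≤ u then 1 else 0) := by
  have hfilter : {x ∈ Icc 1 u | a = x ∨ b = x} = ({a, b} : Finset ℕ).filter (· ≤ u) := by
    ext x
    simp only [mem_filter, mem_Icc, mem_insert, mem_singleton]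
    omega
  rw [hfilter]
  by_cases hbu : b ≤ u
  · simp [filter_insert, filter_singleton, hab.le.trans hbu, hbu, hab.ne]
  · by_cases hau : a ≤ u <;> simp [filter_insert, filter_singleton, hau, hbu]

theorem card_straddling_mod_two {n u : ℕ} {P : Finset (ℕ × ℕ)} (hlt : ∀ p ∈ P, p.1 < p.2)
    (hpos : ∀ p ∈ P, 1 ≤ p.1) (hcover : ∀ x ∈ Icc 1 n, ∃! p, p ∈ P ∧ (p.1 = x ∨ p.2 = x))
    (hun : u ≤ n) :
    #{p ∈ P | p.1 ≤ u ∧ u < p.2} % 2 = u % 2 := by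
  have hcount : u = #{p ∈ P | p.1 ≤ u ∧ u < p.2} + 2 * #{p ∈ P | p.2 ≤ u} := by
    calc u = #(Icc 1 u) := by simp
      _ = ∑ p ∈ P, #{x ∈ Icc 1 u | p.1 = x ∨ p.2 = x} :=
        card_eq_sum_card_filter_of_existsUnique fun x hx =>
          hcover x (Icc_subset_Icc_right hun hx)
      _ = _ := by
        rw [sum_congr rfl fun p hp => card_filter_Icc_one_eq_or_eq (hpos p hp) (hlt p hp),
          sum_add_distrib, ← mul_sum, card_filter, card_filter]
  omega

theorem prod_prod_Ico_eq_prod_pow_card {M : Type*} [CommMonoid M] (f : ℕ → M) {a b : ℕ}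
    {P : Finset (ℕ × ℕ)} (hP : ∀ p ∈ P, a ≤ p.1 ∧ p.2 ≤ b) :
    ∏ p ∈ P, ∏ u ∈ Ico p.1 p.2, f u =
      ∏ u ∈ Ico a b, f u ^ #{p ∈ P | p.1 ≤ u ∧ u < p.2} := by
  simp_rw [← prod_const]
  refine prod_comm' fun p u => ?_
  simp only [mem_filter, mem_Ico]
  constructor
  · rintro ⟨hp, hu⟩
    have := hP p hp
    exact ⟨⟨hp, hu⟩, by omega, by omega⟩
  · rintro ⟨⟨hp, hu⟩, -⟩
    exact ⟨hp, hu⟩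

theorem prod_Ico_pow_mod_two {M : Type*} [CommMonoid M] (f : ℕ → M) (m : ℕ) :
    ∏ u ∈ Ico 1 (2 * m), f u ^ (u % 2) = ∏ j ∈ Icc 1 m, f (2 * j - 1) := by
  induction m with
  | zero => simp
  | succ m ih =>
    rcases m.eq_zero_or_pos with rfl | hm
    · simp
    rw [show 2 * (m + 1) = 2 * m + 1 + 1 by ring, prod_Ico_succ_top (by omega),
      prod_Ico_succ_top (by omega), ih, prod_Icc_succ_top (by omega),
      show 2 * (m + 1) - 1 = 2 * m + 1 by omega]
    simp [Nat.add_mod]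

theorem matching_segment_product_general (m : ℕ) (φ : ℕ → ℂ)
    (hφ : ∀ u ∈ Finset.Icc 1 (2 * m - 1), φ u ^ 2 = 1)
    (P : Finset (ℕ × ℕ))
    (hlt : ∀ p ∈ P, p.1 < p.2)
    (hrange : ∀ p ∈ P, p.1 ∈ Finset.Icc 1 (2 * m) ∧ p.2 ∈ Finset.Icc 1 (2 * m))
    (hcover : ∀ x ∈ Finset.Icc 1 (2 * m), ∃! p, p ∈ P ∧ (p.1 = x ∨ p.2 = x)) :
    ∏ p ∈ P, ∏ u ∈ Finset.Ico p.1 p.2, φ u =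
      ∏ j ∈ Finset.Icc 1 m, φ (2 * j - 1) := by
  have hpos : ∀ p ∈ P, 1 ≤ p.1 := fun p hp => (mem_Icc.1 (hrange p hp).1).1
  rw [prod_prod_Ico_eq_prod_pow_card φ fun p hp => ⟨hpos p hp, (mem_Icc.1 (hrange p hp).2).2⟩,
    ← prod_Ico_pow_mod_two]
  refine prod_congr rfl fun u hu => ?_
  obtain ⟨hu1, hu2⟩ := mem_Ico.1 hu
  rw [pow_eq_pow_mod _ (hφ u (mem_Icc.2 ⟨hu1, by omega⟩)),
    card_straddling_mod_two hlt hpos hcover hu2.le]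

/-- Segment-product identity for windings along a loop: if `φ(u)² = 1` for all
`u ∈ {1, …, 2m − 1}` and `P` is a partition of `{1, …, 2m}` into `m` pairs `(i, τ)` with
`i < τ`, then `∏_{(i,τ) ∈ P} ∏_{u=i}^{τ−1} φ(u) = ∏_{j=1}^{m} φ(2j − 1)`. -/
theorem matching_segment_product (m : ℕ) (hm : 1 ≤ m) (φ : ℕ → ℂ)
    (hφ : ∀ u ∈ Finset.Icc 1 (2 * m - 1), φ u ^ 2 = 1)
    (P : Finset (ℕ × ℕ))
    (hlt : ∀ p ∈ P, p.1 < p.2)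
    (hrange : ∀ p ∈ P, p.1 ∈ Finset.Icc 1 (2 * m) ∧ p.2 ∈ Finset.Icc 1 (2 * m))
    (hcover : ∀ x ∈ Finset.Icc 1 (2 * m), ∃! p, p ∈ P ∧ (p.1 = x ∨ p.2 = x)) :
    ∏ p ∈ P, ∏ u ∈ Finset.Ico p.1 p.2, φ u =
      ∏ j ∈ Finset.Icc 1 m, φ (2 * j - 1) :=
  matching_segment_product_general m φ hφ P hlt hrange hcover
end

section
/- The sign of the permutation associated to a perfect matching equals (−1) to the number of crossings: let P consist of pairs (i₁, τ₁), …, (i_m, τ_m) of {1, …, 2m} with i_j < τ_j for each j and i₁ < i₂ < … < i_m, forming a partition of {1, …, 2m}. Define the permutation μ of {1, …, 2m} by μ(2k−1) = i_k and μ(2k) = τ_k. Then sign(μ) = (−1)^{cr(P)}, where cr(P) = #{ (j, k) : j < k and i_j < i_k < τ_j < τ_k } is the number of crossing pairs of P. -/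
/-!
The one-line word of `μ` is `i₁ τ₁ i₂ τ₂ … i_m τ_m`. Since the `i`'s increase and `i_k < τ_k`, an inversion of this word must start at some `τ_j` and end at an
endpoint of a later pair `k`: either `i_k < τ_j` (the pairs overlap) or `τ_k < τ_j` (pair `k`
is nested in pair `j`). Overlapping pairs either cross or are nested, so the number of
inversions is `cr(P) + 2 · #nestings`, which has the parity of `cr(P)`.
-/

open Finset

namespace Equiv.Perm

theorem sign_eq_neg_one_pow_card_inversions {n : ℕ} (σ : Perm (Fin n)) :
    sign σ = (-1) ^ #{x : Fin n × Fin n | x.1 < x.2 ∧ σ x.2 < σ x.1} := by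
  rw [sign_eq_prod_prod_Iio, ← prod_const, prod_filter, Fintype.prod_prod_type_right]
  refine prod_congr rfl fun j _ ↦ ?_
  rw [← filter_gt_eq_Iio, prod_filter]
  refine prod_congr rfl fun i _ ↦ ?_
  have : i ≠ j → σ i ≠ σ j := σ.injective.ne
  split_ifs <;> grind

theorem sign_eq_neg_one_pow_card_inversions_of_equiv {α β : Type*} [Fintype α] [LinearOrder β]
    {n : ℕ} (σ : Perm (Fin n)) (e : α ≃ Fin n) (w : α → β)
    (hw : ∀ x y, w x < w y ↔ σ (e x) < σ (e y)) :
    sign σ = (-1) ^ #{xy : α × α | e xy.1 < e xy.2 ∧ w xy.2 < w xy.1} := by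
  rw [sign_eq_neg_one_pow_card_inversions]
  congr 1
  refine card_equiv (e.prodCongr e).symm fun xy ↦ ?_
  simp [hw]

end Equiv.Perm

def pairPos (m : ℕ) : Fin m × Fin 2 ≃ Fin (2 * m) :=
  finProdFinEquiv.trans (finCongr (Nat.mul_comm m 2))

@[simp]
lemma pairPos_val {m : ℕ} (x : Fin m × Fin 2) : (pairPos m x : ℕ) = 2 * x.1 + x.2 := by
  simp [pairPos, add_comm, mul_comm]

lemma pairPos_lt_pairPos_iff {m : ℕ} {j k : Fin m} {s t : Fin 2} :
    pairPos m (j, s) < pairPos m (k, t) ↔ j < k ∨ j = k ∧ s < t := by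
  simp only [Fin.lt_def, pairPos_val, Fin.ext_iff]
  omega

section Matching

variable {m : ℕ} {α : Type*} [LinearOrder α] (a b : Fin m → α)

def pairEnd (x : Fin m × Fin 2) : α := if x.2 = 0 then a x.1 else b x.1

def crossings : Finset (Fin m × Fin m) :=
  {jk | jk.1 < jk.2 ∧ a jk.1 < a jk.2 ∧ a jk.2 < b jk.1 ∧ b jk.1 < b jk.2}

def nestings : Finset (Fin m × Fin m) := {jk | jk.1 < jk.2 ∧ b jk.2 < b jk.1}

def overlaps : Finset (Fin m × Fin m) := {jk | jk.1 < jk.2 ∧ a jk.2 < b jk.1}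

variable {a b}

lemma pairEnd_inversion_iff (hab : ∀ k, a k < b k) (ha : StrictMono a) {x y : Fin m × Fin 2} :
    pairPos m x < pairPos m y ∧ pairEnd a b y < pairEnd a b x ↔
      x.2 = 1 ∧ x.1 < y.1 ∧ (y.2 = 0 ∧ a y.1 < b x.1 ∨ y.2 = 1 ∧ b y.1 < b x.1) := by
  obtain ⟨j, s⟩ := x
  obtain ⟨k, t⟩ := y
  have := hab k
  have := ha.lt_iff_lt (a := j) (b := k)
  fin_cases s <;> fin_cases t <;> grind [pairEnd, pairPos_lt_pairPos_iff]

lemma card_pairEnd_inversions (hab : ∀ k, a k < b k) (ha : StrictMono a) :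
    #{xy : (Fin m × Fin 2) × (Fin m × Fin 2) |
        pairPos m xy.1 < pairPos m xy.2 ∧ pairEnd a b xy.2 < pairEnd a b xy.1} =
      #(overlaps a b) + #(nestings b) := by
  let f (t : Fin 2) (jk : Fin m × Fin m) : (Fin m × Fin 2) × (Fin m × Fin 2) :=
    ((jk.1, 1), (jk.2, t))
  have hf (t : Fin 2) : Function.Injective (f t) := fun _ _ h ↦ by simpa [f, Prod.ext_iff] using h
  have hdisj : Disjoint ((overlaps a b).image (f 0)) ((nestings b).image (f 1)) := by
    simp [disjoint_left, f]
  rw [← card_image_of_injective _ (hf 0), ← card_image_of_injective _ (hf 1),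
    ← card_union_of_disjoint hdisj]
  congr 1
  ext ⟨⟨j, s⟩, ⟨k, t⟩⟩
  simp only [mem_filter, mem_univ, true_and, pairEnd_inversion_iff hab ha, mem_union, mem_image,
    overlaps, nestings, f]
  fin_cases s <;> fin_cases t <;> simp

lemma card_overlaps (hab : ∀ k, a k < b k) (ha : StrictMono a) (hb : Function.Injective b) :
    #(overlaps a b) = #(crossings a b) + #(nestings b) := by
  rw [← card_filter_add_card_filter_not (p := fun jk : Fin m × Fin m ↦ b jk.1 < b jk.2)]
  congr 1 <;> congr 1
  · ext ⟨j, k⟩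
    simp only [overlaps, crossings, mem_filter, mem_univ, true_and]
    have := ha.lt_iff_lt (a := j) (b := k)
    tauto
  · ext ⟨j, k⟩
    simp only [overlaps, nestings, mem_filter, mem_univ, true_and]
    have : j ≠ k → b j ≠ b k := hb.ne
    have := hab k
    grind

end Matching

theorem matching_sign_eq_crossings_general (m : ℕ) (a b : Fin m → ℕ)
    (hab : ∀ k, a k < b k)
    (ha : StrictMono a)
    (hrange : ∀ k, 1 ≤ a k ∧ b k ≤ 2 * m)
    (hcover : ∀ x, 1 ≤ x → x ≤ 2 * m → ∃! k, a k = x ∨ b k = x)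
    (μ : Equiv.Perm (Fin (2 * m)))
    (hμ : ∀ (k : Fin m) (j : Fin (2 * m)),
      ((j : ℕ) = 2 * (k : ℕ) → ((μ j : ℕ) + 1 = a k)) ∧
      ((j : ℕ) = 2 * (k : ℕ) + 1 → ((μ j : ℕ) + 1 = b k))) :
    Equiv.Perm.sign μ =
      (-1 : ℤˣ) ^ ((Finset.univ.filter (fun jk : Fin m × Fin m =>
        jk.1 < jk.2 ∧ a jk.1 < a jk.2 ∧ a jk.2 < b jk.1 ∧ b jk.1 < b jk.2)).card) := by
  have hb : Function.Injective b := fun j k hjk ↦ by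
    obtain ⟨u, -, hu⟩ := hcover (b k) ((hrange k).1.trans (hab k).le) (hrange k).2
    exact (hu j (.inr hjk)).trans (hu k (.inr rfl)).symm
  have hμ_word (x : Fin m × Fin 2) : (μ (pairPos m x) : ℕ) + 1 = pairEnd a b x := by
    obtain ⟨k, s⟩ := x
    fin_cases s
    · exact (hμ k _).1 (by simp)
    · exact (hμ k _).2 (by simp)
  have hw (x y : Fin m × Fin 2) :
      pairEnd a b x < pairEnd a b y ↔ μ (pairPos m x) < μ (pairPos m y) := by
    rw [Fin.lt_def, ← hμ_word x, ← hμ_word y]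
    omega
  rw [μ.sign_eq_neg_one_pow_card_inversions_of_equiv (pairPos m) (pairEnd a b) hw,
    card_pairEnd_inversions hab ha, card_overlaps hab ha hb, add_assoc, ← two_mul, pow_add,
    pow_mul]
  simp [crossings]

/-- The sign of the permutation associated to a perfect matching equals `(−1)` to the
number of crossings. The matching of `{1, …, 2m}` is given by pairs `(a k, b k)`,
`k = 1, …, m` (0-indexed by `Fin m`), with `a k < b k`, `a` strictly increasing, and the
pairs partitioning `{1, …, 2m}`. The permutation `μ` of `{1, …, 2m}` (encoded on
`Fin (2m)`, position/value `j` standing for `j + 1`) satisfies `μ(2k−1) = i_k` and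
`μ(2k) = τ_k`; then `sign μ = (−1)^{cr}` where `cr` is the number of crossing pairs. -/
theorem matching_sign_eq_crossings (m : ℕ) (hm : 1 ≤ m) (a b : Fin m → ℕ)
    (hab : ∀ k, a k < b k)
    (ha : StrictMono a)
    (hrange : ∀ k, 1 ≤ a k ∧ b k ≤ 2 * m)
    (hcover : ∀ x, 1 ≤ x → x ≤ 2 * m → ∃! k, a k = x ∨ b k = x)
    (μ : Equiv.Perm (Fin (2 * m)))
    (hμ : ∀ (k : Fin m) (j : Fin (2 * m)),
      ((j : ℕ) = 2 * (k : ℕ) → ((μ j : ℕ) + 1 = a k)) ∧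
      ((j : ℕ) = 2 * (k : ℕ) + 1 → ((μ j : ℕ) + 1 = b k))) :
    Equiv.Perm.sign μ =
      (-1 : ℤˣ) ^ ((Finset.univ.filter (fun jk : Fin m × Fin m =>
        jk.1 < jk.2 ∧ a jk.1 < a jk.2 ∧ a jk.2 < b jk.1 ∧ b jk.1 < b jk.2)).card) :=
  matching_sign_eq_crossings_general m a b hab ha hrange hcover μ hμ
end

section
/- Adding-winding for non-crossing matchings: let m ≥ 1 and let φ : {1, …, 2m−1} → ℂ satisfy φ(u)² = 1 for every u. Let P be a non-crossing partition of {1, …, 2m} into m pairs (i₁, τ₁), …, (i_m, τ_m) with i_j < τ_j and i₁ < … < i_m (non-crossing means there are no j < k with i_j < i_k < τ_j < τ_k), and let μ be the permutation with μ(2k−1) = i_k, μ(2k) = τ_k. Then sign(μ) · ∏_{j=1}^{m} ∏_{u=i_j}^{τ_j−1} φ(u) = ∏_{j=1}^{m} φ(2j−1). -/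
/-!
Expanding the double product gives `∏ᵤ φ(u) ^ d(u)`, where the depth `d(u)` counts the pairs with
`a ≤ u < b`. Among the `u` smallest values `1, …, u`, each pair `a ≤ u` contributes one endpoint
if `u` lies in its interval and two if `b ≤ u`, so `d(u) ≡ u (mod 2)`; as `φ(u)² = 1` only the odd
`u` survive.

For the sign, let positions `i < j` be an inversion of `μ`. Then `i` holds the closing end `b_p`
of a pair `p` and `j` belongs to a later pair `k` with `a_k < b_p`; non-crossing forces
`b_k < b_p`, so the other position of pair `k` also forms an inversion with `i`. Swapping the two
positions of a pair is thus a fixed-point-free involution on the inversions starting at `i`, so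
there is an even number of them and `sign μ = 1`.
-/

open Finset

lemma prod_prod_eq_prod_pow_card {ι α M : Type*} [Fintype ι] [DecidableEq α] [CommMonoid M]
    (t : ι → Finset α) {S : Finset α} (hS : ∀ k, t k ⊆ S) (f : α → M) :
    ∏ k, ∏ u ∈ t k, f u = ∏ u ∈ S, f u ^ #{k | u ∈ t k} := by
  calc ∏ k, ∏ u ∈ t k, f u = ∏ k, ∏ u ∈ S, if u ∈ t k then f u else 1 := by
        simp_rw [prod_ite_mem, inter_eq_right.2 (hS _)]
    _ = ∏ u ∈ S, f u ^ #{k | u ∈ t k} := by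
        rw [prod_comm]
        simp_rw [← prod_filter, prod_const]

lemma prod_ite_one_neg_one_eq_one {α R : Type*} [CommMonoid R] [HasDistribNeg R]
    {s : Finset α} {p : α → Prop} [DecidablePred p] (g : α → α)
    (hg : ∀ x ∈ s, ¬ p x → g x ∈ s ∧ ¬ p (g x) ∧ g x ≠ x ∧ g (g x) = x) :
    ∏ x ∈ s, (if p x then 1 else -1 : R) = 1 := by
  refine prod_involution (fun x _ => if p x then x else g x) (fun x hx => ?_)
    (fun x hx hne => ?_) (fun x hx => ?_) (fun x hx => ?_) <;> by_cases h : p x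
  · simp [h]
  · simp [h, (hg x hx h).2.1]
  · simp [h] at hne
  · simpa [h] using (hg x hx h).2.2.1
  · simpa [h]
  · simpa [h] using (hg x hx h).1
  · simp [h]
  · simp [h, (hg x hx h).2.1, (hg x hx h).2.2.2]

namespace NoncrossingMatching

variable {m : ℕ}

def opener (k : Fin m) : Fin (2 * m) := ⟨2 * k, by omega⟩

def closer (k : Fin m) : Fin (2 * m) := ⟨2 * k + 1, by omega⟩

lemma eq_opener_or_eq_closer (j : Fin (2 * m)) :
    ∃ k, j = opener k ∨ j = closer k :=
  ⟨⟨j / 2, by omega⟩, by rcases Nat.mod_two_eq_zero_or_one j with h | h <;>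
    [left; right] <;> ext <;> simp only [opener, closer] <;> omega⟩

@[to_additive]
lemma prod_univ_eq_prod_opener_mul_closer {M : Type*} [CommMonoid M] (f : Fin (2 * m) → M) :
    ∏ j, f j = ∏ k, f (opener k) * f (closer k) := by
  rw [← (finProdFinEquiv.trans (finCongr (Nat.mul_comm m 2))).prod_comp, Fintype.prod_prod_type]
  refine prod_congr rfl fun k _ => ?_
  rw [Fin.prod_univ_two]
  congr 2 <;> ext <;> simp [opener, closer, Nat.mul_comm, Nat.add_comm]

lemma closer_injective : Function.Injective (closer (m := m)) := fun p k h =>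
  Fin.ext (by simpa [closer] using h)

lemma opener_lt_opener {p k : Fin m} : opener p < opener k ↔ p < k := by
  simp only [opener, Fin.lt_def]; omega

lemma opener_lt_closer {p k : Fin m} : opener p < closer k ↔ p ≤ k := by
  simp only [opener, closer, Fin.lt_def, Fin.le_def]; omega

lemma closer_lt_opener {p k : Fin m} : closer p < opener k ↔ p < k := by
  simp only [opener, closer, Fin.lt_def]; omega

lemma closer_lt_closer {p k : Fin m} : closer p < closer k ↔ p < k := by
  simp only [closer, Fin.lt_def]; omega

def partner (j : Fin (2 * m)) : Fin (2 * m) := ⟨2 * (j / 2) + (1 - j % 2), by omega⟩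

@[simp] lemma partner_opener (k : Fin m) : partner (opener k) = closer k := by
  ext; simp only [partner, opener, closer]; omega

@[simp] lemma partner_closer (k : Fin m) : partner (closer k) = opener k := by
  ext; simp only [partner, opener, closer]; omega

lemma partner_involutive : Function.Involutive (partner (m := m)) := fun j => by
  obtain ⟨k, rfl | rfl⟩ := eq_opener_or_eq_closer j <;> simp

lemma partner_ne (j : Fin (2 * m)) : partner j ≠ j := by
  simp only [ne_eq, Fin.ext_iff, partner]; omega

def IsNoncrossing (a b : Fin m → ℕ) : Prop :=
  ¬ ∃ j k : Fin m, j < k ∧ a j < a k ∧ a k < b j ∧ b j < b k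

variable {a b : Fin m → ℕ}

lemma IsNoncrossing.nested (hnc : IsNoncrossing a b) (ha : StrictMono a)
    (hb : Function.Injective b) {p k : Fin m} (hpk : p < k) (h : a k < b p) : b k < b p := by
  by_contra! hle
  exact hnc ⟨p, k, hpk, ha hpk, h, lt_of_le_of_ne hle fun h' => hpk.ne (hb h')⟩

lemma lt_partner_and_partner_lt_of_inversion (hab : ∀ k, a k < b k) (ha : StrictMono a)
    (hnc : IsNoncrossing a b) {μ : Equiv.Perm (Fin (2 * m))}
    (hμa : ∀ k, (μ (opener k) : ℕ) + 1 = a k) (hμb : ∀ k, (μ (closer k) : ℕ) + 1 = b k)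
    {i j : Fin (2 * m)} (hij : i < j) (hμij : μ j < μ i) :
    i < partner j ∧ μ (partner j) < μ i := by
  have hb : Function.Injective b := fun p k h =>
    closer_injective (μ.injective (Fin.ext (by linarith [hμb p, hμb k])))
  simp only [Fin.lt_def] at hμij
  obtain ⟨p, rfl | rfl⟩ := eq_opener_or_eq_closer i <;>
    obtain ⟨k, rfl | rfl⟩ := eq_opener_or_eq_closer j
  · have := ha (opener_lt_opener.1 hij)
    have := hμa p; have := hμa k
    omega
  · have := hμa p; have := hμb k; have := hab k
    rcases (opener_lt_closer.1 hij).lt_or_eq with hpk | rfl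
    · have := ha hpk
      omega
    · omega
  · have hpk := closer_lt_opener.1 hij
    have := hμb p; have := hμa k; have := hμb k
    have := hnc.nested ha hb hpk (by omega)
    rw [partner_opener]
    exact ⟨closer_lt_closer.2 hpk, Fin.lt_def.2 (by omega)⟩
  · have hpk := closer_lt_closer.1 hij
    have := hμb p; have := hμa k; have := hμb k; have := hab k
    rw [partner_closer]
    exact ⟨closer_lt_opener.2 hpk, Fin.lt_def.2 (by omega)⟩

theorem sign_eq_one (hab : ∀ k, a k < b k) (ha : StrictMono a)
    (hnc : IsNoncrossing a b) {μ : Equiv.Perm (Fin (2 * m))}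
    (hμa : ∀ k, (μ (opener k) : ℕ) + 1 = a k) (hμb : ∀ k, (μ (closer k) : ℕ) + 1 = b k) :
    Equiv.Perm.sign μ = 1 := by
  rw [Equiv.Perm.sign_eq_prod_prod_Ioi]
  refine prod_eq_one fun i _ => prod_ite_one_neg_one_eq_one partner fun j hj hij => ?_
  rw [mem_Ioi] at hj
  have hinv : μ j < μ i := lt_of_le_of_ne (not_lt.1 hij) (μ.injective.ne hj.ne')
  obtain ⟨hi, hμi⟩ := lt_partner_and_partner_lt_of_inversion hab ha hnc hμa hμb hj hinv
  exact ⟨mem_Ioi.2 hi, not_lt.2 hμi.le, partner_ne j, partner_involutive j⟩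

lemma card_filter_perm_val_lt {n : ℕ} (μ : Equiv.Perm (Fin n)) {u : ℕ} (hu : u ≤ n) :
    #{j | (μ j : ℕ) < u} = u := by
  rw [card_equiv μ (t := ({j | (j : ℕ) < u} : Finset (Fin n))) (by simp),
    Fin.card_filter_val_lt, min_eq_right hu]

lemma card_filter_le_add_card_filter_le {μ : Equiv.Perm (Fin (2 * m))}
    (hμa : ∀ k, (μ (opener k) : ℕ) + 1 = a k) (hμb : ∀ k, (μ (closer k) : ℕ) + 1 = b k)
    (u : ℕ) : #{k | a k ≤ u} + #{k | b k ≤ u} = #{j | (μ j : ℕ) < u} := by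
  simp only [card_filter, ← sum_add_distrib, sum_univ_eq_sum_opener_add_closer, ← hμa, ← hμb,
    Nat.add_one_le_iff]

lemma card_filter_mem_Ico_mod_two (hab : ∀ k, a k < b k) {μ : Equiv.Perm (Fin (2 * m))}
    (hμa : ∀ k, (μ (opener k) : ℕ) + 1 = a k) (hμb : ∀ k, (μ (closer k) : ℕ) + 1 = b k)
    {u : ℕ} (hu : u ≤ 2 * m) : #{k | u ∈ Ico (a k) (b k)} % 2 = u % 2 := by
  have hsplit : #{k | a k ≤ u} = #{k | u ∈ Ico (a k) (b k)} + #{k | b k ≤ u} := by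
    simp only [card_filter, ← sum_add_distrib, mem_Ico]
    refine sum_congr rfl fun k _ => ?_
    have := hab k
    split_ifs <;> omega
  have hcount := card_filter_le_add_card_filter_le hμa hμb u
  rw [card_filter_perm_val_lt μ hu] at hcount
  omega

theorem prod_prod_Ico_eq_prod_odd {M : Type*} [CommMonoid M] (φ : ℕ → M)
    (hφ : ∀ u ∈ Icc 1 (2 * m - 1), φ u ^ 2 = 1) (hab : ∀ k, a k < b k)
    {μ : Equiv.Perm (Fin (2 * m))}
    (hμa : ∀ k, (μ (opener k) : ℕ) + 1 = a k) (hμb : ∀ k, (μ (closer k) : ℕ) + 1 = b k) :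
    ∏ k, ∏ u ∈ Ico (a k) (b k), φ u = ∏ k : Fin m, φ (2 * k + 1) := by
  have hsub : ∀ k, Ico (a k) (b k) ⊆ range (2 * m) := fun k u hu => by
    have := hμb k
    simp only [mem_Ico, mem_range] at hu ⊢
    omega
  calc ∏ k, ∏ u ∈ Ico (a k) (b k), φ u
      = ∏ u ∈ range (2 * m), φ u ^ #{k | u ∈ Ico (a k) (b k)} :=
        prod_prod_eq_prod_pow_card _ hsub φ
    _ = ∏ u ∈ range (2 * m), φ u ^ (u % 2) := by
        refine prod_congr rfl fun u hu => ?_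
        rw [mem_range] at hu
        rcases Nat.eq_zero_or_pos u with rfl | hu0
        -- `φ 0 ^ 2` need not be `1`, but no interval contains `0`.
        · rw [card_eq_zero.2 (filter_eq_empty_iff.2 fun k _ => by simp [← hμa k])]
        · rw [pow_eq_pow_mod _ (hφ u (mem_Icc.2 ⟨hu0, by omega⟩)),
            card_filter_mem_Ico_mod_two hab hμa hμb hu.le]
    _ = ∏ k : Fin m, φ (2 * k + 1) := by
        rw [← Fin.prod_univ_eq_prod_range, prod_univ_eq_prod_opener_mul_closer]
        simp [opener, closer, Nat.add_mod]

end NoncrossingMatching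

theorem noncrossing_adding_winding_general (m : ℕ) (φ : ℕ → ℂ)
    (hφ : ∀ u ∈ Finset.Icc 1 (2 * m - 1), φ u ^ 2 = 1)
    (a b : Fin m → ℕ)
    (hab : ∀ k, a k < b k)
    (ha : StrictMono a)
    (hnc : ¬ ∃ j k : Fin m, j < k ∧ a j < a k ∧ a k < b j ∧ b j < b k)
    (μ : Equiv.Perm (Fin (2 * m)))
    (hμ : ∀ (k : Fin m) (j : Fin (2 * m)),
      ((j : ℕ) = 2 * (k : ℕ) → ((μ j : ℕ) + 1 = a k)) ∧
      ((j : ℕ) = 2 * (k : ℕ) + 1 → ((μ j : ℕ) + 1 = b k))) :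
    ((Equiv.Perm.sign μ : ℤ) : ℂ) * ∏ k : Fin m, ∏ u ∈ Finset.Ico (a k) (b k), φ u =
      ∏ k : Fin m, φ (2 * (k : ℕ) + 1) := by
  have hμa : ∀ k, (μ (NoncrossingMatching.opener k) : ℕ) + 1 = a k := fun k => (hμ k _).1 rfl
  have hμb : ∀ k, (μ (NoncrossingMatching.closer k) : ℕ) + 1 = b k := fun k => (hμ k _).2 rfl
  rw [NoncrossingMatching.sign_eq_one hab ha hnc hμa hμb,
    NoncrossingMatching.prod_prod_Ico_eq_prod_odd φ hφ hab hμa hμb]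
  simp

/-- Adding-winding for non-crossing matchings: if `φ(u)² = 1` for `u ∈ {1, …, 2m−1}`, the
pairs `(a k, b k)` form a non-crossing partition of `{1, …, 2m}` with `a k < b k` and `a`
strictly increasing, and `μ` is the associated permutation (`μ(2k−1) = a k`,
`μ(2k) = b k`, encoded on `Fin (2m)` with position/value `j` standing for `j + 1`), then
`sign μ · ∏ₖ ∏_{u = a k}^{b k − 1} φ(u) = ∏_{j=1}^{m} φ(2j − 1)`. -/
theorem noncrossing_adding_winding (m : ℕ) (hm : 1 ≤ m) (φ : ℕ → ℂ)
    (hφ : ∀ u ∈ Finset.Icc 1 (2 * m - 1), φ u ^ 2 = 1)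
    (a b : Fin m → ℕ)
    (hab : ∀ k, a k < b k)
    (ha : StrictMono a)
    (hrange : ∀ k, 1 ≤ a k ∧ b k ≤ 2 * m)
    (hcover : ∀ x, 1 ≤ x → x ≤ 2 * m → ∃! k, a k = x ∨ b k = x)
    (hnc : ¬ ∃ j k : Fin m, j < k ∧ a j < a k ∧ a k < b j ∧ b j < b k)
    (μ : Equiv.Perm (Fin (2 * m)))
    (hμ : ∀ (k : Fin m) (j : Fin (2 * m)),
      ((j : ℕ) = 2 * (k : ℕ) → ((μ j : ℕ) + 1 = a k)) ∧
      ((j : ℕ) = 2 * (k : ℕ) + 1 → ((μ j : ℕ) + 1 = b k))) :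
    ((Equiv.Perm.sign μ : ℤ) : ℂ) * ∏ k : Fin m, ∏ u ∈ Finset.Ico (a k) (b k), φ u =
      ∏ k : Fin m, φ (2 * (k : ℕ) + 1) :=
  noncrossing_adding_winding_general m φ hφ a b hab ha hnc μ hμ
end

section
/- Edwards–Sokal marginal over edge configurations: let G be a finite simple graph with vertex set V and edge set E, let β ≥ 0 and p = 1 − e^{−2β}. Then for every spin configuration σ : V → {−1, 1}, Σ_{ω ⊆ E} μ(σ, ω) = e^{−β|E|} · e^{β H(σ)}, where H(σ) = Σ_{{x,y} ∈ E} σ_x σ_y. In particular the σ-marginal of the normalized Edwards–Sokal measure is the Ising measure π_β(σ) ∝ e^{β H(σ)}. -/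
open Finset

/-- The product of the spins at the two endpoints of an unordered pair of vertices. -/
def spinProd {V : Type*} (σ : V → ℝ) : Sym2 V → ℝ :=
  Sym2.lift ⟨fun x y => σ x * σ y, fun x y => mul_comm _ _⟩

/-- The Edwards–Sokal weight `μ(σ, ω)` with parameter `p`, edge set `E` and open edge set
`ω`: an edge `e ∉ ω` contributes `1 − p`; an edge `e ∈ ω` contributes `p` if its endpoint
spins agree and `0` otherwise. -/
noncomputable def esWeight {V : Type*} [DecidableEq V] (p : ℝ)
    (E ω : Finset (Sym2 V)) (σ : V → ℝ) : ℝ :=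
  ∏ e ∈ E, if e ∈ ω then (if spinProd σ e = 1 then p else 0) else (1 - p)

/-!
Summing the Edwards–Sokal weight over `ω ⊆ E` factorises over the edges (`Finset.prod_add`):
each edge contributes `1` if its endpoint spins agree and `1 − p = e^{−2β}` otherwise, which
in both cases is `e^{β (σ_x σ_y − 1)}`.
-/

theorem spinProd_eq_one_or_neg_one {V : Type*} {σ : V → ℝ} (hσ : ∀ v, σ v = 1 ∨ σ v = -1)
    (e : Sym2 V) : spinProd σ e = 1 ∨ spinProd σ e = -1 :=
  Sym2.inductionOn e fun x y => by
    rcases hσ x with hx | hx <;> rcases hσ y with hy | hy <;> simp [spinProd, hx, hy]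

theorem esWeight_eq_prod_mul_prod {V : Type*} [DecidableEq V] (p : ℝ) {E ω : Finset (Sym2 V)}
    (hω : ω ⊆ E) (σ : V → ℝ) :
    esWeight p E ω σ =
      (∏ e ∈ ω, if spinProd σ e = 1 then p else 0) * ∏ _e ∈ E \ ω, (1 - p) := by
  rw [esWeight, prod_ite, filter_mem_eq_inter, inter_eq_right.mpr hω, ← sdiff_eq_filter]

theorem sum_powerset_esWeight {V : Type*} [DecidableEq V] (p : ℝ) (E : Finset (Sym2 V))
    (σ : V → ℝ) :
    ∑ ω ∈ E.powerset, esWeight p E ω σ =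
      ∏ e ∈ E, ((if spinProd σ e = 1 then p else 0) + (1 - p)) := by
  rw [prod_add]
  exact sum_congr rfl fun ω hω => esWeight_eq_prod_mul_prod p (mem_powerset.mp hω) σ

theorem ite_add_one_sub_eq_exp {β s : ℝ} (hs : s = 1 ∨ s = -1) :
    (if s = 1 then 1 - Real.exp (-2 * β) else 0) + (1 - (1 - Real.exp (-2 * β))) =
      Real.exp (β * (s - 1)) := by
  rcases hs with rfl | rfl
  · simp
  · norm_num
    ring_nf

theorem sum_powerset_esWeight_eq_exp {V : Type*} [DecidableEq V] (β : ℝ) (E : Finset (Sym2 V))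
    {σ : V → ℝ} (hσ : ∀ v, σ v = 1 ∨ σ v = -1) :
    ∑ ω ∈ E.powerset, esWeight (1 - Real.exp (-2 * β)) E ω σ =
      Real.exp (-β * (E.card : ℝ)) * Real.exp (β * ∑ e ∈ E, spinProd σ e) := by
  calc
    _ = ∏ e ∈ E, Real.exp (β * (spinProd σ e - 1)) := by
      rw [sum_powerset_esWeight]
      exact prod_congr rfl fun e _ => ite_add_one_sub_eq_exp (spinProd_eq_one_or_neg_one hσ e)
    _ = Real.exp (∑ e ∈ E, β * (spinProd σ e - 1)) := (Real.exp_sum _ _).symm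
    _ = _ := by
      rw [← Real.exp_add, ← mul_sum, sum_sub_distrib, sum_const, nsmul_one]
      ring_nf

theorem edwards_sokal_spin_marginal_general {V : Type*} [Fintype V] [DecidableEq V]
    (G : SimpleGraph V) [DecidableRel G.Adj] (β : ℝ)
    (p : ℝ) (hp : p = 1 - Real.exp (-2 * β))
    (σ : V → ℝ) (hσ : ∀ v, σ v = 1 ∨ σ v = -1) :
    ∑ ω ∈ G.edgeFinset.powerset, esWeight p G.edgeFinset ω σ =
      Real.exp (-β * (G.edgeFinset.card : ℝ)) *
        Real.exp (β * ∑ e ∈ G.edgeFinset, spinProd σ e) := by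
  subst hp
  exact sum_powerset_esWeight_eq_exp β G.edgeFinset hσ

/-- Edwards–Sokal marginal over edge configurations: for `β ≥ 0`, `p = 1 − e^{−2β}` and any
`±1`-valued spin configuration `σ`,
`∑_{ω ⊆ E} μ(σ, ω) = e^{−β |E|} · e^{β H(σ)}` where `H(σ) = ∑_{{x,y} ∈ E} σ_x σ_y`. -/
theorem edwards_sokal_spin_marginal {V : Type*} [Fintype V] [DecidableEq V]
    (G : SimpleGraph V) [DecidableRel G.Adj] (β : ℝ) (hβ : 0 ≤ β)
    (p : ℝ) (hp : p = 1 - Real.exp (-2 * β))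
    (σ : V → ℝ) (hσ : ∀ v, σ v = 1 ∨ σ v = -1) :
    ∑ ω ∈ G.edgeFinset.powerset, esWeight p G.edgeFinset ω σ =
      Real.exp (-β * (G.edgeFinset.card : ℝ)) *
        Real.exp (β * ∑ e ∈ G.edgeFinset, spinProd σ e) :=
  edwards_sokal_spin_marginal_general G β p hp σ hσ
end
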